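/- arXiv:1701.04725 — 11 statements merged into one kernel-verified Lean document; each statement's English description precedes it below -/
import Mathlib

section
/- Let a < b and let g : [a,b] → ℝ be a C², positive-valued, distance-like function satisfying g''(t) ≥ (1 − (g'(t))²)/g(t) for all t ∈ [a,b]. Then for all t₁, t₂ with a ≤ t₁ < t₂ ≤ b and all u ∈ ℝ, v > 0 such that √((u − t₁)² + v²) = g(t₁) and √((u − t₂)² + v²) = g(t₂), one has g(t) ≤ √((u − t)² + v²) for all t ∈ [t₁, t₂]. -/
/-!
The inequality `g g'' ≥ 1 - g'²` says `(g²)'' ≥ 2 = ((u - t)² + v²)''`, so the difference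
`g² - ((u - t)² + v²)` is convex. It vanishes at `t₁` and `t₂`, hence is nonpositive
between them.
-/

open Set Topology

theorem hasDerivAt_derivWithin_Icc {f : ℝ → ℝ} {a b x : ℝ}
    (hf : DifferentiableOn ℝ f (Icc a b)) (hx : x ∈ Ioo a b) :
    HasDerivAt f (derivWithin f (Icc a b) x) x := by
  have hmem : Icc a b ∈ 𝓝 x := Icc_mem_nhds hx.1 hx.2
  rw [derivWithin_of_mem_nhds hmem]
  exact hf.hasDerivAt hmem

theorem convexOn_sq_sub_sq_of_one_le {a b : ℝ} (hab : a < b) {g : ℝ → ℝ}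
    (hg : ContDiffOn ℝ 2 g (Icc a b))
    (h : ∀ t ∈ Ioo a b, 1 ≤ derivWithin g (Icc a b) t ^ 2 +
      g t * derivWithin (derivWithin g (Icc a b)) (Icc a b) t) (u : ℝ) :
    ConvexOn ℝ (Icc a b) fun t => g t ^ 2 - (t - u) ^ 2 := by
  set g' := derivWithin g (Icc a b)
  set g'' := derivWithin g' (Icc a b)
  have hg' : ContDiffOn ℝ 1 g' (Icc a b) := hg.derivWithin (uniqueDiffOn_Icc hab) (by norm_num)
  have hd : ∀ x ∈ Ioo a b, HasDerivAt g (g' x) x := fun x ↦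
    hasDerivAt_derivWithin_Icc (hg.differentiableOn (by norm_num))
  have hd' : ∀ x ∈ Ioo a b, HasDerivAt g' (g'' x) x := fun x ↦
    hasDerivAt_derivWithin_Icc (hg'.differentiableOn one_ne_zero)
  refine convexOn_of_hasDerivWithinAt2_nonneg (convex_Icc a b)
    (f' := fun t => 2 * (g t * g' t - (t - u)))
    (f'' := fun t => 2 * (g' t ^ 2 + g t * g'' t - 1)) ?_ ?_ ?_ ?_
  · exact (hg.continuousOn.pow 2).sub (by fun_prop)
  · rw [interior_Icc]
    intro x hx
    have hw' : HasDerivAt (fun t => g t ^ 2 - (t - u) ^ 2) (2 * (g x * g' x - (x - u))) x := by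
      refine (((hd x hx).fun_pow 2).fun_sub
        ((hasDerivAt_id' x).sub_const u |>.fun_pow 2)).congr_deriv ?_
      push_cast
      ring
    exact hw'.hasDerivWithinAt
  · rw [interior_Icc]
    intro x hx
    have hw'' : HasDerivAt (fun t => 2 * (g t * g' t - (t - u)))
        (2 * (g' x ^ 2 + g x * g'' x - 1)) x := by
      refine ((((hd x hx).fun_mul (hd' x hx)).fun_sub ((hasDerivAt_id' x).sub_const u)).const_mul
        (2 : ℝ)).congr_deriv ?_
      ring
    exact hw''.hasDerivWithinAt
  · rw [interior_Icc]
    intro x hx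
    linarith [h x hx]

theorem euclid_comparison_of_diff_ineq_general (a b : ℝ) (hab : a < b) (g : ℝ → ℝ)
    (hC2 : ContDiffOn ℝ 2 g (Icc a b))
    (hpos : ∀ t ∈ Icc a b, 0 < g t)
    (hineq : ∀ t ∈ Icc a b, (derivWithin (derivWithin g (Icc a b)) (Icc a b)) t ≥ (1 - ((derivWithin g (Icc a b)) t) ^ 2) / g t) :
    ∀ t₁ t₂, a ≤ t₁ → t₁ < t₂ → t₂ ≤ b → ∀ u v : ℝ, 0 < v →
      Real.sqrt ((u - t₁) ^ 2 + v ^ 2) = g t₁ →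
      Real.sqrt ((u - t₂) ^ 2 + v ^ 2) = g t₂ →
      ∀ t ∈ Icc t₁ t₂, g t ≤ Real.sqrt ((u - t) ^ 2 + v ^ 2) := by
  intro t₁ t₂ ht₁ ht₁₂ ht₂ u v _ h₁ h₂ t ht
  have hode : ∀ s ∈ Ioo a b, 1 ≤ derivWithin g (Icc a b) s ^ 2 +
      g s * derivWithin (derivWithin g (Icc a b)) (Icc a b) s := by
    intro s hs
    have hs' := hineq s (Ioo_subset_Icc_self hs)
    rw [ge_iff_le, div_le_iff₀ (hpos s (Ioo_subset_Icc_self hs))] at hs'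
    linarith
  have hconv := convexOn_sq_sub_sq_of_one_le hab hC2 hode u
  have hend : ∀ s, Real.sqrt ((u - s) ^ 2 + v ^ 2) = g s → g s ^ 2 - (s - u) ^ 2 = v ^ 2 := by
    intro s hs
    rw [← hs, Real.sq_sqrt (by positivity)]
    ring
  have hsub : Icc t₁ t₂ ⊆ Icc a b := Icc_subset_Icc ht₁ ht₂
  have hle : g t ^ 2 - (t - u) ^ 2 ≤ v ^ 2 := by
    have := hconv.le_on_segment (hsub (left_mem_Icc.2 ht₁₂.le))
      (hsub (right_mem_Icc.2 ht₁₂.le)) (by rwa [segment_eq_Icc ht₁₂.le])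
    simpa only [hend t₁ h₁, hend t₂ h₂, max_self] using this
  rw [Real.le_sqrt' (hpos t (hsub ht))]
  linarith

theorem euclid_comparison_of_diff_ineq (a b : ℝ) (hab : a < b) (g : ℝ → ℝ)
    (hC2 : ContDiffOn ℝ 2 g (Icc a b))
    (hpos : ∀ t ∈ Icc a b, 0 < g t)
    (hnonexp : ∀ t₁ ∈ Icc a b, ∀ t₂ ∈ Icc a b, |g t₁ - g t₂| ≤ |t₁ - t₂|)
    (hdistlike : ∀ t₁ ∈ Icc a b, ∀ t₂ ∈ Icc a b, |t₁ - t₂| ≤ g t₁ + g t₂)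
    (hineq : ∀ t ∈ Icc a b, (derivWithin (derivWithin g (Icc a b)) (Icc a b)) t ≥ (1 - ((derivWithin g (Icc a b)) t) ^ 2) / g t) :
    ∀ t₁ t₂, a ≤ t₁ → t₁ < t₂ → t₂ ≤ b → ∀ u v : ℝ, 0 < v →
      Real.sqrt ((u - t₁) ^ 2 + v ^ 2) = g t₁ →
      Real.sqrt ((u - t₂) ^ 2 + v ^ 2) = g t₂ →
      ∀ t ∈ Icc t₁ t₂, g t ≤ Real.sqrt ((u - t) ^ 2 + v ^ 2) :=
  euclid_comparison_of_diff_ineq_general a b hab g hC2 hpos hineq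
end

section
/- Let a < b and let g : [a,b] → ℝ be a C², positive-valued, distance-like function. Suppose that for every t₁, t₂ with a ≤ t₁ < t₂ ≤ b there exist u ∈ ℝ and v > 0 with √((u − t₁)² + v²) = g(t₁), √((u − t₂)² + v²) = g(t₂), and g(t) ≤ √((u − t)² + v²) for all t ∈ [t₁, t₂]. Then g''(t) ≥ (1 − (g'(t))²)/g(t) holds for all t ∈ [a,b]. -/
/-!
Write `g₀ t = √((u - t)² + v²)` and `φ = g² - g₀²`, so that `φ'' = 2 (g g'' + g'² - 1)`.
If `g g'' + g'² < 1` held at some point, it would hold on a small interval `[t₁, t₂]`,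
and there `φ` would be strictly concave. Taking the comparison function `g₀` of that
interval, `φ` vanishes at `t₁, t₂` and is `≤ 0` in between, which a strictly concave
function cannot do.
-/

open Set Topology

noncomputable def euclidComparison (u v t : ℝ) : ℝ := √((u - t) ^ 2 + v ^ 2)

lemma euclidComparison_sq (u v t : ℝ) : euclidComparison u v t ^ 2 = (u - t) ^ 2 + v ^ 2 :=
  Real.sq_sqrt (by positivity)

section Concavity

variable {g g' g'' : ℝ → ℝ}

lemma hasDerivAt_sq_sub_quadratic {u v x : ℝ} (hg : HasDerivAt g (g' x) x) :
    HasDerivAt (fun t => g t ^ 2 - ((u - t) ^ 2 + v ^ 2)) (2 * (g x * g' x + (u - x))) x := by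
  have h := (hg.pow 2).sub ((((hasDerivAt_id x).const_sub u).pow 2).add_const (v ^ 2))
  exact h.congr_deriv (by simp only [id, Nat.cast_ofNat]; ring)

lemma hasDerivAt_deriv_sq_sub_quadratic {u x : ℝ} (hg : HasDerivAt g (g' x) x)
    (hg' : HasDerivAt g' (g'' x) x) :
    HasDerivAt (fun t => 2 * (g t * g' t + (u - t))) (2 * (g x * g'' x + g' x ^ 2 - 1)) x := by
  exact (((hg.mul hg').add ((hasDerivAt_id x).const_sub u)).const_mul 2).congr_deriv (by ring)

lemma strictConcaveOn_sq_sub_quadratic {t₁ t₂ : ℝ} (hg : ContinuousOn g (Icc t₁ t₂))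
    (hg' : ∀ x ∈ Ioo t₁ t₂, HasDerivAt g (g' x) x)
    (hg'' : ∀ x ∈ Ioo t₁ t₂, HasDerivAt g' (g'' x) x)
    (hlt : ∀ x ∈ Ioo t₁ t₂, g x * g'' x + g' x ^ 2 < 1) (u v : ℝ) :
    StrictConcaveOn ℝ (Icc t₁ t₂) (fun t => g t ^ 2 - ((u - t) ^ 2 + v ^ 2)) := by
  have hderiv : EqOn (deriv fun t => g t ^ 2 - ((u - t) ^ 2 + v ^ 2))
      (fun t => 2 * (g t * g' t + (u - t))) (Ioo t₁ t₂) :=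
    fun x hx => (hasDerivAt_sq_sub_quadratic (hg' x hx)).deriv
  have hanti : StrictAntiOn (fun t => 2 * (g t * g' t + (u - t))) (Ioo t₁ t₂) := by
    refine strictAntiOn_of_deriv_neg (convex_Ioo t₁ t₂)
      (fun x hx => (hasDerivAt_deriv_sq_sub_quadratic (hg' x hx) (hg'' x hx)).continuousAt
        |>.continuousWithinAt) fun x hx => ?_
    rw [interior_Ioo] at hx
    rw [(hasDerivAt_deriv_sq_sub_quadratic (hg' x hx) (hg'' x hx)).deriv]
    linarith [hlt x hx]
  refine StrictAntiOn.strictConcaveOn_of_deriv (convex_Icc t₁ t₂) (by fun_prop) ?_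
  rw [interior_Icc]
  exact hanti.congr hderiv.symm

end Concavity

theorem exists_one_le_of_le_euclidComparison {g g' g'' : ℝ → ℝ} {t₁ t₂ u v : ℝ}
    (h12 : t₁ < t₂) (hg : ContinuousOn g (Icc t₁ t₂))
    (hg' : ∀ x ∈ Ioo t₁ t₂, HasDerivAt g (g' x) x)
    (hg'' : ∀ x ∈ Ioo t₁ t₂, HasDerivAt g' (g'' x) x)
    (hnonneg : ∀ t ∈ Icc t₁ t₂, 0 ≤ g t)
    (h₁ : euclidComparison u v t₁ = g t₁) (h₂ : euclidComparison u v t₂ = g t₂)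
    (hle : ∀ t ∈ Icc t₁ t₂, g t ≤ euclidComparison u v t) :
    ∃ x ∈ Ioo t₁ t₂, 1 ≤ g x * g'' x + g' x ^ 2 := by
  by_contra! hlt
  obtain ⟨m, hm⟩ := nonempty_Ioo.2 h12
  have hφm := (strictConcaveOn_sq_sub_quadratic hg hg' hg'' hlt u v).lt_on_openSegment
    (left_mem_Icc.2 h12.le) (right_mem_Icc.2 h12.le) h12.ne (openSegment_eq_Ioo h12 ▸ hm)
  have hm_le : g m ^ 2 ≤ euclidComparison u v m ^ 2 :=
    pow_le_pow_left₀ (hnonneg m (Ioo_subset_Icc_self hm)) (hle m (Ioo_subset_Icc_self hm)) 2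
  rw [← h₁, ← h₂, euclidComparison_sq, euclidComparison_sq] at hφm
  rw [euclidComparison_sq] at hm_le
  simp only [sub_self, min_self] at hφm
  linarith

lemma exists_Icc_subset_of_mem_nhdsWithin_Icc {a b t : ℝ} {s : Set ℝ} (hab : a < b)
    (ht : t ∈ Icc a b) (hs : s ∈ 𝓝[Icc a b] t) :
    ∃ t₁ t₂, a ≤ t₁ ∧ t₁ < t₂ ∧ t₂ ≤ b ∧ Icc t₁ t₂ ⊆ s := by
  obtain ⟨ε, hε, hball⟩ := Metric.mem_nhdsWithin_iff.1 hs
  refine ⟨max a (t - ε / 2), min b (t + ε / 2), le_max_left _ _, ?_, min_le_left _ _, ?_⟩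
  · simp only [max_lt_iff, lt_min_iff]
    exact ⟨⟨hab, by linarith [ht.2]⟩, by linarith [ht.1], by linarith⟩
  · rintro x ⟨hx₁, hx₂⟩
    simp only [max_le_iff, le_min_iff] at hx₁ hx₂
    refine hball ⟨?_, hx₁.1, hx₂.1⟩
    rw [Metric.mem_ball, Real.dist_eq, abs_lt]
    constructor <;> linarith

theorem diff_ineq_of_euclid_comparison_general (a b : ℝ) (hab : a < b) (g : ℝ → ℝ)
    (hC2 : ContDiffOn ℝ 2 g (Icc a b))
    (hpos : ∀ t ∈ Icc a b, 0 < g t)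
    (hcmp : ∀ t₁ t₂, a ≤ t₁ → t₁ < t₂ → t₂ ≤ b → ∃ u v : ℝ, 0 < v ∧
      Real.sqrt ((u - t₁) ^ 2 + v ^ 2) = g t₁ ∧
      Real.sqrt ((u - t₂) ^ 2 + v ^ 2) = g t₂ ∧
      ∀ t ∈ Icc t₁ t₂, g t ≤ Real.sqrt ((u - t) ^ 2 + v ^ 2)) :
    ∀ t ∈ Icc a b, (derivWithin (derivWithin g (Icc a b)) (Icc a b)) t ≥ (1 - ((derivWithin g (Icc a b)) t) ^ 2) / g t := by
  intro t₀ ht₀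
  set g' := derivWithin g (Icc a b)
  set g'' := derivWithin g' (Icc a b)
  have hg : DifferentiableOn ℝ g (Icc a b) := hC2.differentiableOn (by norm_num)
  have hC1 : ContDiffOn ℝ 1 g' (Icc a b) := hC2.derivWithin (uniqueDiffOn_Icc hab) (by norm_num)
  have hg' : DifferentiableOn ℝ g' (Icc a b) := hC1.differentiableOn one_ne_zero
  have hF : ContinuousOn (fun t => g t * g'' t + g' t ^ 2) (Icc a b) :=
    (hg.continuousOn.mul (hC1.continuousOn_derivWithin (uniqueDiffOn_Icc hab) le_rfl)).add
      (hg'.continuousOn.pow 2)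
  suffices 1 ≤ g t₀ * g'' t₀ + g' t₀ ^ 2 by
    rw [ge_iff_le, div_le_iff₀ (hpos t₀ ht₀)]
    linarith
  by_contra! hlt
  obtain ⟨t₁, t₂, ha, h12, hb, hsub⟩ :=
    exists_Icc_subset_of_mem_nhdsWithin_Icc hab ht₀ ((hF t₀ ht₀).eventually_lt_const hlt)
  have hI : Icc t₁ t₂ ⊆ Icc a b := Icc_subset_Icc ha hb
  have hnhds : ∀ x ∈ Ioo t₁ t₂, Icc a b ∈ 𝓝 x := fun x hx =>
    Icc_mem_nhds (ha.trans_lt hx.1) (hx.2.trans_le hb)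
  obtain ⟨u, v, -, h₁, h₂, hle⟩ := hcmp t₁ t₂ ha h12 hb
  obtain ⟨x, hx, hFx⟩ := exists_one_le_of_le_euclidComparison h12 (hg.continuousOn.mono hI)
    (fun x hx => (hg x (hI (Ioo_subset_Icc_self hx))).hasDerivWithinAt.hasDerivAt (hnhds x hx))
    (fun x hx => (hg' x (hI (Ioo_subset_Icc_self hx))).hasDerivWithinAt.hasDerivAt (hnhds x hx))
    (fun t ht => (hpos t (hI ht)).le) h₁ h₂ hle
  exact (hsub (Ioo_subset_Icc_self hx)).not_ge hFx

theorem diff_ineq_of_euclid_comparison (a b : ℝ) (hab : a < b) (g : ℝ → ℝ)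
    (hC2 : ContDiffOn ℝ 2 g (Icc a b))
    (hpos : ∀ t ∈ Icc a b, 0 < g t)
    (hnonexp : ∀ t₁ ∈ Icc a b, ∀ t₂ ∈ Icc a b, |g t₁ - g t₂| ≤ |t₁ - t₂|)
    (hdistlike : ∀ t₁ ∈ Icc a b, ∀ t₂ ∈ Icc a b, |t₁ - t₂| ≤ g t₁ + g t₂)
    (hcmp : ∀ t₁ t₂, a ≤ t₁ → t₁ < t₂ → t₂ ≤ b → ∃ u v : ℝ, 0 < v ∧
      Real.sqrt ((u - t₁) ^ 2 + v ^ 2) = g t₁ ∧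
      Real.sqrt ((u - t₂) ^ 2 + v ^ 2) = g t₂ ∧
      ∀ t ∈ Icc t₁ t₂, g t ≤ Real.sqrt ((u - t) ^ 2 + v ^ 2)) :
    ∀ t ∈ Icc a b, (derivWithin (derivWithin g (Icc a b)) (Icc a b)) t ≥ (1 - ((derivWithin g (Icc a b)) t) ^ 2) / g t :=
  diff_ineq_of_euclid_comparison_general a b hab g hC2 hpos hcmp
end

section
/- Let a < b and let g : [a,b] → ℝ be a C², positive-valued, distance-like function satisfying g''(t) ≤ (1 − (g'(t))²)/g(t) for all t ∈ [a,b]. Then for all t₁, t₂ with a ≤ t₁ < t₂ ≤ b and all u ∈ ℝ, v > 0 such that √((u − t₁)² + v²) = g(t₁) and √((u − t₂)² + v²) = g(t₂), one has g(t) ≥ √((u − t)² + v²) for all t ∈ [t₁, t₂]. -/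
open Set

/-!
Multiplying the differential inequality by `g > 0` turns it into `g g'' + g'² ≤ 1`, which says
exactly that `h := g² − ((u − t)² + v²)` has `h'' = 2 (g g'' + g'² − 1) ≤ 0`. So `h` is concave;
it vanishes at `t₁` and `t₂`, hence is nonnegative on `[t₁, t₂]`, i.e. `g ≥ g₀` there.
-/

theorem concaveOn_sq_sub_sq_of_mul_deriv2_add_sq_le_one {D : Set ℝ} (hD : Convex ℝ D)
    (hDu : UniqueDiffOn ℝ D) {g : ℝ → ℝ} (hg : ContDiffOn ℝ 2 g D)
    (h : ∀ x ∈ interior D,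
      g x * derivWithin (derivWithin g D) D x + derivWithin g D x ^ 2 ≤ 1) (u : ℝ) :
    ConcaveOn ℝ D (fun x => g x ^ 2 - (u - x) ^ 2) := by
  set g' := derivWithin g D
  set g'' := derivWithin g' D
  have hg' : ContDiffOn ℝ 1 g' D := hg.derivWithin hDu (by norm_num)
  have hderiv : ∀ x ∈ interior D, HasDerivAt g (g' x) x ∧ HasDerivAt g' (g'' x) x := by
    intro x hx
    have hD : D ∈ nhds x := mem_interior_iff_mem_nhds.1 hx
    have hxD : x ∈ D := interior_subset hx
    exact ⟨((hg.differentiableOn two_ne_zero) x hxD).hasDerivWithinAt.hasDerivAt hD,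
      ((hg'.differentiableOn one_ne_zero) x hxD).hasDerivWithinAt.hasDerivAt hD⟩
  refine concaveOn_of_hasDerivWithinAt2_nonpos hD (f' := fun x => 2 * g x * g' x + 2 * (u - x))
    (f'' := fun x => 2 * g' x ^ 2 + 2 * g x * g'' x - 2)
    ((hg.continuousOn.pow 2).sub (by fun_prop)) (fun x hx => ?_) (fun x hx => ?_)
    (fun x hx => by linarith [h x hx])
  · have := ((hderiv x hx).1.pow 2).sub (((hasDerivAt_id x).const_sub u).pow 2)
    exact (this.congr_deriv (by simp)).hasDerivWithinAt
  · have := (((hderiv x hx).1.const_mul 2).mul (hderiv x hx).2).add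
      (((hasDerivAt_id x).const_sub u).const_mul 2)
    exact (this.congr_deriv (by ring)).hasDerivWithinAt

theorem euclid_comparison_of_diff_ineq_rev_general (a b : ℝ) (hab : a < b) (g : ℝ → ℝ)
    (hC2 : ContDiffOn ℝ 2 g (Icc a b))
    (hpos : ∀ t ∈ Icc a b, 0 < g t)
    (hineq : ∀ t ∈ Icc a b, (derivWithin (derivWithin g (Icc a b)) (Icc a b)) t ≤ (1 - ((derivWithin g (Icc a b)) t) ^ 2) / g t) :
    ∀ t₁ t₂, a ≤ t₁ → t₁ < t₂ → t₂ ≤ b → ∀ u v : ℝ, 0 < v →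
      Real.sqrt ((u - t₁) ^ 2 + v ^ 2) = g t₁ →
      Real.sqrt ((u - t₂) ^ 2 + v ^ 2) = g t₂ →
      ∀ t ∈ Icc t₁ t₂, g t ≥ Real.sqrt ((u - t) ^ 2 + v ^ 2) := by
  intro t₁ t₂ ht₁ ht₁₂ ht₂ u v _ e₁ e₂ t ht
  have hsub : Icc t₁ t₂ ⊆ Icc a b := Icc_subset_Icc ht₁ ht₂
  have ht₁S : t₁ ∈ Icc a b := hsub ⟨le_rfl, ht₁₂.le⟩
  have ht₂S : t₂ ∈ Icc a b := hsub ⟨ht₁₂.le, le_rfl⟩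
  have hineq' : ∀ x ∈ Icc a b, g x * derivWithin (derivWithin g (Icc a b)) (Icc a b) x +
      derivWithin g (Icc a b) x ^ 2 ≤ 1 := fun x hx => by
    linarith [(le_div_iff₀ (hpos x hx)).1 (hineq x hx)]
  have hconc : ConcaveOn ℝ (Icc a b) (fun x => g x ^ 2 - (u - x) ^ 2) :=
    concaveOn_sq_sub_sq_of_mul_deriv2_add_sq_le_one (convex_Icc a b) (uniqueDiffOn_Icc hab) hC2
      (fun x hx => hineq' x (interior_subset hx)) u
  have hend : ∀ s ∈ Icc a b, Real.sqrt ((u - s) ^ 2 + v ^ 2) = g s →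
      g s ^ 2 - (u - s) ^ 2 = v ^ 2 := fun s hs e => by
    linarith [(Real.sqrt_eq_iff_eq_sq (by positivity) (hpos s hs).le).1 e]
  have hmin := hconc.ge_on_segment ht₁S ht₂S (by rwa [segment_eq_Icc ht₁₂.le])
  rw [hend t₁ ht₁S e₁, hend t₂ ht₂S e₂, min_self] at hmin
  rw [ge_iff_le, Real.sqrt_le_left (hpos t (hsub ht)).le]
  linarith

theorem euclid_comparison_of_diff_ineq_rev (a b : ℝ) (hab : a < b) (g : ℝ → ℝ)
    (hC2 : ContDiffOn ℝ 2 g (Icc a b))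
    (hpos : ∀ t ∈ Icc a b, 0 < g t)
    (hnonexp : ∀ t₁ ∈ Icc a b, ∀ t₂ ∈ Icc a b, |g t₁ - g t₂| ≤ |t₁ - t₂|)
    (hdistlike : ∀ t₁ ∈ Icc a b, ∀ t₂ ∈ Icc a b, |t₁ - t₂| ≤ g t₁ + g t₂)
    (hineq : ∀ t ∈ Icc a b, (derivWithin (derivWithin g (Icc a b)) (Icc a b)) t ≤ (1 - ((derivWithin g (Icc a b)) t) ^ 2) / g t) :
    ∀ t₁ t₂, a ≤ t₁ → t₁ < t₂ → t₂ ≤ b → ∀ u v : ℝ, 0 < v →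
      Real.sqrt ((u - t₁) ^ 2 + v ^ 2) = g t₁ →
      Real.sqrt ((u - t₂) ^ 2 + v ^ 2) = g t₂ →
      ∀ t ∈ Icc t₁ t₂, g t ≥ Real.sqrt ((u - t) ^ 2 + v ^ 2) :=
  euclid_comparison_of_diff_ineq_rev_general a b hab g hC2 hpos hineq
end

section
/- Let a < b and let g : [a,b] → ℝ be a C², positive-valued, distance-like function. Suppose that for every t₁, t₂ with a ≤ t₁ < t₂ ≤ b there exist u ∈ ℝ and v > 0 with √((u − t₁)² + v²) = g(t₁), √((u − t₂)² + v²) = g(t₂), and g(t) ≥ √((u − t)² + v²) for all t ∈ [t₁, t₂]. Then g''(t) ≤ (1 − (g'(t))²)/g(t) holds for all t ∈ [a,b]. -/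
/-!
Squaring the comparison inequality `g t ≥ √((u - t)² + v²)` and subtracting `t²` shows that
`g(t)² - t²` lies above the affine function `u² + v² - 2 u t` on `[t₁, t₂]`, with equality at the
endpoints. So `g(t)² - t²` lies above all its chords, i.e. it is concave, and its second derivative
`2 (g'² + g g'' - 1)` is nonpositive.
-/

open Set

lemma concaveOn_of_forall_affine_minorant {s : Set ℝ} {f : ℝ → ℝ} (hs : Convex ℝ s)
    (h : ∀ x ∈ s, ∀ z ∈ s, x < z → ∃ α β : ℝ, f x = α + β * x ∧ f z = α + β * z ∧
      ∀ y ∈ Icc x z, α + β * y ≤ f y) :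
    ConcaveOn ℝ s f := by
  refine concaveOn_of_slope_anti_adjacent hs fun {x y z} hx hz hxy hyz => ?_
  obtain ⟨α, β, hfx, hfz, hle⟩ := h x hx z hz (hxy.trans hyz)
  have hfy := hle y ⟨hxy.le, hyz.le⟩
  calc (f z - f y) / (z - y) ≤ β := by rw [div_le_iff₀ (sub_pos.2 hyz)]; linarith
    _ ≤ (f y - f x) / (y - x) := by rw [le_div_iff₀ (sub_pos.2 hxy)]; linarith

lemma concaveOn_sq_sub_sq_of_euclid_comparison {a b : ℝ} {g : ℝ → ℝ}
    (hcmp : ∀ t₁ t₂, a ≤ t₁ → t₁ < t₂ → t₂ ≤ b → ∃ u v : ℝ,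
      √((u - t₁) ^ 2 + v ^ 2) = g t₁ ∧ √((u - t₂) ^ 2 + v ^ 2) = g t₂ ∧
      ∀ t ∈ Icc t₁ t₂, √((u - t) ^ 2 + v ^ 2) ≤ g t) :
    ConcaveOn ℝ (Icc a b) (fun t => g t ^ 2 - t ^ 2) := by
  refine concaveOn_of_forall_affine_minorant (convex_Icc a b) fun x hx z hz hxz => ?_
  obtain ⟨u, v, hgx, hgz, hle⟩ := hcmp x z hx.1 hxz hz.2
  have hsq : ∀ t, √((u - t) ^ 2 + v ^ 2) ^ 2 = u ^ 2 + v ^ 2 + -2 * u * t + t ^ 2 := by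
    intro t
    rw [Real.sq_sqrt (by positivity)]; ring
  refine ⟨u ^ 2 + v ^ 2, -2 * u, ?_, ?_, fun t ht => ?_⟩
  · rw [← hgx, hsq]; ring
  · rw [← hgz, hsq]; ring
  · have := pow_le_pow_left₀ (Real.sqrt_nonneg _) (hle t ht) 2
    rw [hsq] at this
    linarith

lemma ConcaveOn.derivWithin_derivWithin_nonpos {s : Set ℝ} {f : ℝ → ℝ} {x : ℝ}
    (hf : ConcaveOn ℝ s f) (hd : DifferentiableOn ℝ f s) :
    derivWithin (derivWithin f s) s x ≤ 0 :=
  (hf.antitoneOn_derivWithin hd).derivWithin_nonpos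

section

variable {s : Set ℝ} {g : ℝ → ℝ} {t : ℝ}

lemma hasDerivWithinAt_sq_sub_sq (hg : DifferentiableWithinAt ℝ g s t) :
    HasDerivWithinAt (fun t => g t ^ 2 - t ^ 2) (2 * (g t * derivWithin g s t - t)) s t := by
  refine ((hg.hasDerivWithinAt.fun_pow 2).fun_sub
    ((hasDerivWithinAt_id t s).fun_pow 2)).congr_deriv ?_
  simp only [id]
  ring

lemma derivWithin_derivWithin_sq_sub_sq (hs : UniqueDiffOn ℝ s) (ht : t ∈ s)
    (hg : DifferentiableOn ℝ g s) (hg' : DifferentiableOn ℝ (derivWithin g s) s) :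
    derivWithin (derivWithin (fun t => g t ^ 2 - t ^ 2) s) s t =
      2 * (derivWithin g s t ^ 2 + g t * derivWithin (derivWithin g s) s t - 1) := by
  have hfirst : EqOn (derivWithin (fun t => g t ^ 2 - t ^ 2) s)
      (fun t => 2 * (g t * derivWithin g s t - t)) s := fun t ht =>
    (hasDerivWithinAt_sq_sub_sq (hg t ht)).derivWithin (hs t ht)
  rw [derivWithin_congr hfirst (hfirst ht)]
  refine HasDerivWithinAt.derivWithin ?_ (hs t ht)
  refine ((((hg t ht).hasDerivWithinAt.fun_mul (hg' t ht).hasDerivWithinAt).fun_sub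
    (hasDerivWithinAt_id t s)).const_mul 2).congr_deriv ?_
  ring

end

theorem diff_ineq_rev_of_euclid_comparison_general (a b : ℝ) (hab : a < b) (g : ℝ → ℝ)
    (hC2 : ContDiffOn ℝ 2 g (Icc a b))
    (hpos : ∀ t ∈ Icc a b, 0 < g t)
    (hcmp : ∀ t₁ t₂, a ≤ t₁ → t₁ < t₂ → t₂ ≤ b → ∃ u v : ℝ, 0 < v ∧
      Real.sqrt ((u - t₁) ^ 2 + v ^ 2) = g t₁ ∧
      Real.sqrt ((u - t₂) ^ 2 + v ^ 2) = g t₂ ∧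
      ∀ t ∈ Icc t₁ t₂, g t ≥ Real.sqrt ((u - t) ^ 2 + v ^ 2)) :
    ∀ t ∈ Icc a b, (derivWithin (derivWithin g (Icc a b)) (Icc a b)) t ≤ (1 - ((derivWithin g (Icc a b)) t) ^ 2) / g t := by
  intro t ht
  have hs : UniqueDiffOn ℝ (Icc a b) := uniqueDiffOn_Icc hab
  have hg : DifferentiableOn ℝ g (Icc a b) := hC2.differentiableOn (by norm_num)
  have hg' : DifferentiableOn ℝ (derivWithin g (Icc a b)) (Icc a b) :=
    (hC2.derivWithin (m := 1) hs (by norm_num)).differentiableOn (by norm_num)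
  have hconc : ConcaveOn ℝ (Icc a b) (fun t => g t ^ 2 - t ^ 2) :=
    concaveOn_sq_sub_sq_of_euclid_comparison fun t₁ t₂ h₁ h₁₂ h₂ => by
      obtain ⟨u, v, -, hu₁, hu₂, hle⟩ := hcmp t₁ t₂ h₁ h₁₂ h₂
      exact ⟨u, v, hu₁, hu₂, hle⟩
  have hnonpos := hconc.derivWithin_derivWithin_nonpos (x := t)
    fun t ht => (hasDerivWithinAt_sq_sub_sq (hg t ht)).differentiableWithinAt
  rw [derivWithin_derivWithin_sq_sub_sq hs ht hg hg'] at hnonpos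
  rw [le_div_iff₀ (hpos t ht)]
  linarith

theorem diff_ineq_rev_of_euclid_comparison (a b : ℝ) (hab : a < b) (g : ℝ → ℝ)
    (hC2 : ContDiffOn ℝ 2 g (Icc a b))
    (hpos : ∀ t ∈ Icc a b, 0 < g t)
    (hnonexp : ∀ t₁ ∈ Icc a b, ∀ t₂ ∈ Icc a b, |g t₁ - g t₂| ≤ |t₁ - t₂|)
    (hdistlike : ∀ t₁ ∈ Icc a b, ∀ t₂ ∈ Icc a b, |t₁ - t₂| ≤ g t₁ + g t₂)
    (hcmp : ∀ t₁ t₂, a ≤ t₁ → t₁ < t₂ → t₂ ≤ b → ∃ u v : ℝ, 0 < v ∧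
      Real.sqrt ((u - t₁) ^ 2 + v ^ 2) = g t₁ ∧
      Real.sqrt ((u - t₂) ^ 2 + v ^ 2) = g t₂ ∧
      ∀ t ∈ Icc t₁ t₂, g t ≥ Real.sqrt ((u - t) ^ 2 + v ^ 2)) :
    ∀ t ∈ Icc a b, (derivWithin (derivWithin g (Icc a b)) (Icc a b)) t ≤ (1 - ((derivWithin g (Icc a b)) t) ^ 2) / g t :=
  diff_ineq_rev_of_euclid_comparison_general a b hab g hC2 hpos hcmp
end

section
/- Let k < 0, u ∈ ℝ, v > 0, and define g_k : ℝ → ℝ by g_k(t) = (1/√(−k)) · arcosh( ((u² + v²) e^{−√(−k) t} + e^{√(−k) t}) / (2v) ). Then at every t ∈ ℝ at which ((u² + v²) e^{−√(−k) t} + e^{√(−k) t}) / (2v) > 1 (equivalently g_k(t) > 0), the function g_k is twice differentiable and satisfies g_k''(t) = √(−k) · (1 − (g_k'(t))²) · coth(√(−k) · g_k(t)). -/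
noncomputable def arcosh (x : ℝ) : ℝ := Real.log (x + Real.sqrt (x ^ 2 - 1))

noncomputable def coth (x : ℝ) : ℝ := Real.cosh x / Real.sinh x

/-- The hyperbolic comparison function. -/
noncomputable def gHyp (k u v t : ℝ) : ℝ :=
  (1 / Real.sqrt (-k)) *
    arcosh (((u ^ 2 + v ^ 2) * Real.exp (-(Real.sqrt (-k)) * t) +
      Real.exp (Real.sqrt (-k) * t)) / (2 * v))

/-! With `s = √(-k)`, the argument of `arcosh` is `F = A e^{-st} + B e^{st}`, so `F'' = s² F`.
For any such `F > 1`, `g = arcosh F / s` has `g' = F' / (s √(F² - 1))`; differentiating again and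
using `F'' = s² F` gives `g'' = F (s² (F² - 1) - F'²) / (s (F² - 1)^{3/2})`, which is
`s (1 - g'²) coth (s g)` because `coth (arcosh F) = F / √(F² - 1)`. -/

open Filter Topology

theorem arcosh_eq_real_arcosh : arcosh = Real.arcosh := rfl

theorem coth_arcosh {x : ℝ} (hx : 1 ≤ x) : coth (arcosh x) = x / √(x ^ 2 - 1) := by
  rw [coth, arcosh_eq_real_arcosh, Real.cosh_arcosh hx, Real.sinh_arcosh hx]

theorem HasDerivAt.arcosh {f : ℝ → ℝ} {f' x : ℝ} (hf : HasDerivAt f f' x) (hx : 1 < f x) :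
    HasDerivAt (fun y => arcosh (f y)) (f' / √(f x ^ 2 - 1)) x := by
  rw [div_eq_inv_mul]
  exact (Real.hasDerivAt_arcosh hx).comp x hf

noncomputable def expComb (a b s t : ℝ) : ℝ := a * Real.exp (-s * t) + b * Real.exp (s * t)

theorem hasDerivAt_expComb (a b s t : ℝ) :
    HasDerivAt (expComb a b s) (s * expComb (-a) b s t) t := by
  have h := (((hasDerivAt_id t).const_mul (-s)).exp.const_mul a).add
    (((hasDerivAt_id t).const_mul s).exp.const_mul b)
  refine h.congr_deriv ?_
  simp only [expComb, id]
  ring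

theorem arcosh_comp_comparison_ode {f f' g : ℝ → ℝ} {s t : ℝ} (hs : s ≠ 0)
    (hg : g = fun x => 1 / s * arcosh (f x)) (hf : ∀ᶠ x in 𝓝 t, HasDerivAt f (f' x) x)
    (hf' : HasDerivAt f' (s ^ 2 * f t) t) (ht : 1 < f t) :
    DifferentiableAt ℝ g t ∧ DifferentiableAt ℝ (deriv g) t ∧
      deriv (deriv g) t = s * (1 - deriv g t ^ 2) * coth (s * g t) := by
  subst hg
  set G : ℝ → ℝ := fun x => 1 / s * (f' x / √(f x ^ 2 - 1))
  have hf_gt : ∀ᶠ x in 𝓝 t, 1 < f x :=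
    hf.self_of_nhds.continuousAt.eventually (eventually_gt_nhds ht)
  have hg' : ∀ᶠ x in 𝓝 t, HasDerivAt (fun x => 1 / s * arcosh (f x)) (G x) x := by
    filter_upwards [hf, hf_gt] with x hfx hx using (hfx.arcosh hx).const_mul (1 / s)
  have hderiv : deriv (fun x => 1 / s * arcosh (f x)) =ᶠ[𝓝 t] G := by
    filter_upwards [hg'] with x hx using hx.deriv
  have hw : 0 < f t ^ 2 - 1 := by nlinarith
  have hG : HasDerivAt G _ t :=
    (hf'.div (((hf.self_of_nhds.fun_pow 2).sub_const 1).sqrt hw.ne')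
      (Real.sqrt_pos.2 hw).ne').const_mul (1 / s)
  refine ⟨hg'.self_of_nhds.differentiableAt,
    hG.differentiableAt.congr_of_eventuallyEq hderiv, ?_⟩
  have hsg : s * (1 / s * arcosh (f t)) = arcosh (f t) := by field_simp
  rw [hderiv.deriv_eq, hG.deriv, hg'.self_of_nhds.deriv]
  beta_reduce
  rw [hsg, coth_arcosh ht.le]
  simp only [G, Nat.cast_ofNat, pow_one, Nat.add_one_sub_one]
  field_simp

theorem hyperbolic_comparison_ode_general (k u v : ℝ) (hk : k < 0) (t : ℝ)
    (hgt : 1 < ((u ^ 2 + v ^ 2) * Real.exp (-(Real.sqrt (-k)) * t) +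
      Real.exp (Real.sqrt (-k) * t)) / (2 * v)) :
    DifferentiableAt ℝ (gHyp k u v) t ∧ DifferentiableAt ℝ (deriv (gHyp k u v)) t ∧
      deriv (deriv (gHyp k u v)) t =
        Real.sqrt (-k) * (1 - (deriv (gHyp k u v) t) ^ 2) *
          coth (Real.sqrt (-k) * gHyp k u v t) := by
  set s := Real.sqrt (-k)
  have hs : s ≠ 0 := (Real.sqrt_pos.2 (neg_pos.2 hk)).ne'
  have hF : ∀ x, ((u ^ 2 + v ^ 2) * Real.exp (-s * x) + Real.exp (s * x)) / (2 * v) =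
      expComb ((u ^ 2 + v ^ 2) / (2 * v)) (1 / (2 * v)) s x := fun x => by
    rw [expComb]; ring
  refine arcosh_comp_comparison_ode hs ?_ (.of_forall fun x => hasDerivAt_expComb _ _ s x)
    ?_ (hF t ▸ hgt)
  · funext x
    rw [gHyp, hF]
  · refine ((hasDerivAt_expComb _ _ s t).const_mul s).congr_deriv ?_
    rw [neg_neg]
    ring

/-- For `k < 0`, at every point where the argument of `arcosh` exceeds `1`, the hyperbolic
comparison function is twice differentiable and satisfies
`g_k'' = √(-k) (1 - (g_k')²) coth(√(-k) g_k)`. -/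
theorem hyperbolic_comparison_ode (k u v : ℝ) (hk : k < 0) (hv : 0 < v) (t : ℝ)
    (hgt : 1 < ((u ^ 2 + v ^ 2) * Real.exp (-(Real.sqrt (-k)) * t) +
      Real.exp (Real.sqrt (-k) * t)) / (2 * v)) :
    DifferentiableAt ℝ (gHyp k u v) t ∧ DifferentiableAt ℝ (deriv (gHyp k u v)) t ∧
      deriv (deriv (gHyp k u v)) t =
        Real.sqrt (-k) * (1 - (deriv (gHyp k u v) t) ^ 2) *
          coth (Real.sqrt (-k) * gHyp k u v t) :=
  hyperbolic_comparison_ode_general k u v hk t hgt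
end

section
/- Let k < 0, let a < b, and let g : [a,b] → ℝ be a C², positive-valued, distance-like function. Suppose that for every t₁, t₂ with a ≤ t₁ < t₂ ≤ b there exist u ∈ ℝ and v > 0 with g_k(t₁; u, v) = g(t₁), g_k(t₂; u, v) = g(t₂), and g(t) ≥ g_k(t; u, v) for all t ∈ [t₁, t₂]. Then g''(t) ≤ √(−k)·(1 − (g'(t))²)·coth(√(−k)·g(t)) holds for all t ∈ [a,b]. -/
open Set

/-!
Put `s = √(-k)`. Since `cosh (s * g_k(t; u, v)) = ((u² + v²) e^{-st} + e^{st}) / (2v)`, the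
function `φ = cosh (s * g_k)` solves `φ'' = s² φ`. If `ψ = cosh (s * g)` lies above such a `φ` on
`[t₁, t₂]` and touches it at both ends, the one-sided derivatives at the ends compare, so
`ψ'(t₂) - ψ'(t₁) ≤ φ'(t₂) - φ'(t₁) = ∫ s² φ ≤ ∫ s² ψ`. Hence `ψ' - ∫ s² ψ` is antitone and
`ψ'' ≤ s² ψ`, which expands to `s sinh(s g) g'' ≤ s² (1 - g'²) cosh(s g)`.
-/

theorem HasDerivWithinAt.le_of_le_of_eq_left {φ ψ : ℝ → ℝ} {c d φ' ψ' : ℝ} (hcd : c < d)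
    (hφ : HasDerivWithinAt φ φ' (Icc c d) c) (hψ : HasDerivWithinAt ψ ψ' (Icc c d) c)
    (hle : ∀ t ∈ Icc c d, φ t ≤ ψ t) (heq : φ c = ψ c) : φ' ≤ ψ' := by
  have hmin : IsLocalMinOn (ψ - φ) (Icc c d) c :=
    IsMinOn.localize fun t ht => by simpa [heq] using hle t ht
  have hcone : d - c ∈ posTangentConeAt (Icc c d) c :=
    sub_mem_posTangentConeAt_of_segment_subset
      ((convex_Icc c d).segment_subset (left_mem_Icc.2 hcd.le) (right_mem_Icc.2 hcd.le))
  have hfermat := hmin.hasFDerivWithinAt_nonneg (hψ.sub hφ).hasFDerivWithinAt hcone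
  simp only [ContinuousLinearMap.toSpanSingleton_apply, smul_eq_mul] at hfermat
  nlinarith

theorem HasDerivWithinAt.le_of_le_of_eq_right {φ ψ : ℝ → ℝ} {c d φ' ψ' : ℝ} (hcd : c < d)
    (hφ : HasDerivWithinAt φ φ' (Icc c d) d) (hψ : HasDerivWithinAt ψ ψ' (Icc c d) d)
    (hle : ∀ t ∈ Icc c d, φ t ≤ ψ t) (heq : φ d = ψ d) : ψ' ≤ φ' := by
  have hmin : IsLocalMinOn (ψ - φ) (Icc c d) d :=
    IsMinOn.localize fun t ht => by simpa [heq] using hle t ht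
  have hcone : c - d ∈ posTangentConeAt (Icc c d) d :=
    sub_mem_posTangentConeAt_of_segment_subset
      ((convex_Icc c d).segment_subset (right_mem_Icc.2 hcd.le) (left_mem_Icc.2 hcd.le))
  have hfermat := hmin.hasFDerivWithinAt_nonneg (hψ.sub hφ).hasFDerivWithinAt hcone
  simp only [ContinuousLinearMap.toSpanSingleton_apply, smul_eq_mul] at hfermat
  nlinarith

theorem sub_le_integral_of_le_of_eq_endpoints {φ φ' ψ : ℝ → ℝ} {c t₁ t₂ ψ₁ ψ₂ : ℝ}
    (h12 : t₁ < t₂) (hφ : ∀ t, HasDerivAt φ (φ' t) t) (hφ' : ∀ t, HasDerivAt φ' (c * φ t) t)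
    (hc : 0 ≤ c) (hψ : ContinuousOn ψ (Icc t₁ t₂))
    (hψ₁ : HasDerivWithinAt ψ ψ₁ (Icc t₁ t₂) t₁) (hψ₂ : HasDerivWithinAt ψ ψ₂ (Icc t₁ t₂) t₂)
    (hle : ∀ t ∈ Icc t₁ t₂, φ t ≤ ψ t) (heq₁ : φ t₁ = ψ t₁) (heq₂ : φ t₂ = ψ t₂) :
    ψ₂ - ψ₁ ≤ ∫ t in t₁..t₂, c * ψ t := by
  have hφc : Continuous φ := continuous_iff_continuousAt.2 fun t => (hφ t).continuousAt
  have h₁ := (hφ t₁).hasDerivWithinAt.le_of_le_of_eq_left h12 hψ₁ hle heq₁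
  have h₂ := (hφ t₂).hasDerivWithinAt.le_of_le_of_eq_right h12 hψ₂ hle heq₂
  calc ψ₂ - ψ₁ ≤ φ' t₂ - φ' t₁ := by linarith
    _ = ∫ t in t₁..t₂, c * φ t :=
      (intervalIntegral.integral_eq_sub_of_hasDerivAt (fun t _ => hφ' t)
        ((continuous_const.mul hφc).intervalIntegrable _ _)).symm
    _ ≤ ∫ t in t₁..t₂, c * ψ t :=
      intervalIntegral.integral_mono_on h12.le
        ((continuous_const.mul hφc).intervalIntegrable _ _)
        ((continuousOn_const.mul hψ).intervalIntegrable_of_Icc h12.le)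
        fun t ht => mul_le_mul_of_nonneg_left (hle t ht) hc

theorem HasDerivWithinAt.le_of_sub_le_integral {f h : ℝ → ℝ} {a b t₀ f' : ℝ} (hab : a < b)
    (ht₀ : t₀ ∈ Icc a b) (hf : HasDerivWithinAt f f' (Icc a b) t₀) (hh : ContinuousOn h (Icc a b))
    (hle : ∀ t₁ ∈ Icc a b, ∀ t₂ ∈ Icc a b, t₁ < t₂ → f t₂ - f t₁ ≤ ∫ t in t₁..t₂, h t) :
    f' ≤ h t₀ := by
  have hint : ∀ t₁ ∈ Icc a b, ∀ t₂ ∈ Icc a b, IntervalIntegrable h MeasureTheory.volume t₁ t₂ :=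
    fun t₁ ht₁ t₂ ht₂ => (hh.mono (uIcc_subset_Icc ht₁ ht₂)).intervalIntegrable
  have hanti : AntitoneOn (fun t => f t - ∫ x in a..t, h x) (Icc a b) := by
    intro t₁ ht₁ t₂ ht₂ h12
    rcases h12.lt_or_eq with h12 | rfl
    · have hstep := hle t₁ ht₁ t₂ ht₂ h12
      rw [← intervalIntegral.integral_interval_sub_left (hint a (left_mem_Icc.2 hab.le) t₂ ht₂)
        (hint a (left_mem_Icc.2 hab.le) t₁ ht₁)] at hstep
      dsimp only
      linarith
    · exact le_rfl
  -- the instance `FTCFilter.nhdsIcc` behind the one-sided FTC below needs this fact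
  have : Fact (t₀ ∈ Icc a b) := ⟨ht₀⟩
  have hF : HasDerivWithinAt (fun t => f t - ∫ x in a..t, h x) (f' - h t₀) (Icc a b) t₀ :=
    hf.sub (intervalIntegral.integral_hasDerivWithinAt_right
      (hint a (left_mem_Icc.2 hab.le) t₀ ht₀)
      (hh.stronglyMeasurableAtFilter_nhdsWithin measurableSet_Icc t₀) (hh t₀ ht₀))
  have hnonpos := hanti.derivWithin_nonpos (x := t₀)
  rw [hF.derivWithin (uniqueDiffOn_Icc hab t₀ ht₀)] at hnonpos
  linarith

theorem hasDerivWithinAt_cosh_const_mul {g : ℝ → ℝ} {s : Set ℝ} {t : ℝ}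
    (hg : DifferentiableWithinAt ℝ g s t) (c : ℝ) :
    HasDerivWithinAt (fun t => Real.cosh (c * g t))
      (Real.sinh (c * g t) * (c * derivWithin g s t)) s t :=
  (Real.hasDerivAt_cosh _).comp_hasDerivWithinAt t (hg.hasDerivWithinAt.const_mul c)

theorem hasDerivWithinAt_sinh_const_mul_mul_derivWithin {g : ℝ → ℝ} {s : Set ℝ} {t : ℝ}
    (hg : DifferentiableWithinAt ℝ g s t) (hg' : DifferentiableWithinAt ℝ (derivWithin g s) s t)
    (c : ℝ) :
    HasDerivWithinAt (fun t => Real.sinh (c * g t) * (c * derivWithin g s t))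
      (Real.cosh (c * g t) * (c * derivWithin g s t) ^ 2 +
        Real.sinh (c * g t) * (c * derivWithin (derivWithin g s) s t)) s t :=
  (((Real.hasDerivAt_sinh _).comp_hasDerivWithinAt t (hg.hasDerivWithinAt.const_mul c)).mul
    (hg'.hasDerivWithinAt.const_mul c)).congr_deriv (by rw [Function.comp_apply]; ring)

theorem le_mul_one_sub_sq_mul_coth {s x p q : ℝ} (hs : 0 < s) (hx : 0 < x)
    (h : Real.cosh x * (s * p) ^ 2 + Real.sinh x * (s * q) ≤ s ^ 2 * Real.cosh x) :
    q ≤ s * (1 - p ^ 2) * coth x := by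
  rw [coth, ← mul_div_assoc, le_div_iff₀ (Real.sinh_pos_iff.2 hx)]
  refine le_of_mul_le_mul_left ?_ hs
  linear_combination h

theorem one_le_sq_add_sq_mul_exp_neg_add_exp_div (u : ℝ) {v : ℝ} (hv : 0 < v) (x : ℝ) :
    1 ≤ ((u ^ 2 + v ^ 2) * Real.exp (-x) + Real.exp x) / (2 * v) := by
  have hexp : Real.exp (-x) * Real.exp x = 1 := by
    rw [← Real.exp_add, neg_add_cancel, Real.exp_zero]
  rw [le_div_iff₀ (by positivity)]
  nlinarith [sq_nonneg (v * Real.exp (-x) - 1), sq_nonneg u, Real.exp_pos (-x), Real.exp_pos x,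
    mul_nonneg (sq_nonneg u) (Real.exp_pos (-x)).le]

theorem cosh_mul_gHyp {k : ℝ} (hk : k < 0) (u : ℝ) {v : ℝ} (hv : 0 < v) (t : ℝ) :
    Real.cosh (Real.sqrt (-k) * gHyp k u v t) =
      ((u ^ 2 + v ^ 2) * Real.exp (-(Real.sqrt (-k) * t)) + Real.exp (Real.sqrt (-k) * t)) /
        (2 * v) := by
  have hs : Real.sqrt (-k) ≠ 0 := (Real.sqrt_pos.2 (neg_pos.2 hk)).ne'
  rw [gHyp, ← mul_assoc, mul_one_div_cancel hs, one_mul, neg_mul]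
  exact Real.cosh_arcosh (one_le_sq_add_sq_mul_exp_neg_add_exp_div u hv _)

theorem gHyp_nonneg (k u : ℝ) {v : ℝ} (hv : 0 < v) (t : ℝ) : 0 ≤ gHyp k u v t := by
  rw [gHyp, neg_mul]
  exact mul_nonneg (by positivity)
    (Real.arcosh_nonneg (one_le_sq_add_sq_mul_exp_neg_add_exp_div u hv _))

theorem hasDerivAt_exp_neg_add_exp (α β s t : ℝ) :
    HasDerivAt (fun t => α * Real.exp (-(s * t)) + β * Real.exp (s * t))
      (-s * α * Real.exp (-(s * t)) + s * β * Real.exp (s * t)) t := by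
  have hlin : HasDerivAt (fun t => s * t) s t := by simpa using (hasDerivAt_id t).const_mul s
  exact ((hlin.fun_neg.exp.const_mul α).fun_add (hlin.exp.const_mul β)).congr_deriv (by ring)

theorem cosh_deriv_sub_le_integral_of_gHyp_le {k u v t₁ t₂ ψ₁ ψ₂ : ℝ} {g : ℝ → ℝ} (hk : k < 0)
    (hv : 0 < v) (h12 : t₁ < t₂) (hg : ContinuousOn g (Icc t₁ t₂)) (hg0 : ∀ t ∈ Icc t₁ t₂, 0 ≤ g t)
    (hψ₁ : HasDerivWithinAt (fun t => Real.cosh (Real.sqrt (-k) * g t)) ψ₁ (Icc t₁ t₂) t₁)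
    (hψ₂ : HasDerivWithinAt (fun t => Real.cosh (Real.sqrt (-k) * g t)) ψ₂ (Icc t₁ t₂) t₂)
    (heq₁ : gHyp k u v t₁ = g t₁) (heq₂ : gHyp k u v t₂ = g t₂)
    (hle : ∀ t ∈ Icc t₁ t₂, gHyp k u v t ≤ g t) :
    ψ₂ - ψ₁ ≤ ∫ t in t₁..t₂, -k * Real.cosh (Real.sqrt (-k) * g t) := by
  set s := Real.sqrt (-k)
  have hs : 0 < s := Real.sqrt_pos.2 (neg_pos.2 hk)
  have hss : s * s = -k := Real.mul_self_sqrt (neg_nonneg.2 hk.le)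
  set α := (u ^ 2 + v ^ 2) / (2 * v)
  set β := 1 / (2 * v)
  have hφ : (fun t => Real.cosh (s * gHyp k u v t)) =
      fun t => α * Real.exp (-(s * t)) + β * Real.exp (s * t) := by
    funext t
    rw [cosh_mul_gHyp hk u hv]
    ring
  refine sub_le_integral_of_le_of_eq_endpoints (φ := fun t => Real.cosh (s * gHyp k u v t))
    (φ' := fun t => -s * α * Real.exp (-(s * t)) + s * β * Real.exp (s * t)) h12
    (fun t => hφ ▸ hasDerivAt_exp_neg_add_exp α β s t) (fun t => ?_) (neg_nonneg.2 hk.le)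
    (Real.continuous_cosh.comp_continuousOn (continuousOn_const.mul hg)) hψ₁ hψ₂
    (fun t ht => ?_) (by rw [heq₁]) (by rw [heq₂])
  · refine (hasDerivAt_exp_neg_add_exp (-s * α) (s * β) s t).congr_deriv ?_
    rw [show Real.cosh (s * gHyp k u v t) = _ from congrFun hφ t, ← hss]
    ring
  · rw [Real.cosh_le_cosh, abs_of_nonneg (mul_nonneg hs.le (gHyp_nonneg k u hv t)),
      abs_of_nonneg (mul_nonneg hs.le (hg0 t ht))]
    exact mul_le_mul_of_nonneg_left (hle t ht) hs.le

theorem diff_ineq_rev_of_hyp_comparison_general (k : ℝ) (hk : k < 0) (a b : ℝ) (hab : a < b) (g : ℝ → ℝ)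
    (hC2 : ContDiffOn ℝ 2 g (Icc a b))
    (hpos : ∀ t ∈ Icc a b, 0 < g t)
    (hcmp : ∀ t₁ t₂, a ≤ t₁ → t₁ < t₂ → t₂ ≤ b → ∃ u v : ℝ, 0 < v ∧
      gHyp k u v t₁ = g t₁ ∧ gHyp k u v t₂ = g t₂ ∧
      ∀ t ∈ Icc t₁ t₂, g t ≥ gHyp k u v t) :
    ∀ t ∈ Icc a b, (derivWithin (derivWithin g (Icc a b)) (Icc a b)) t ≤ Real.sqrt (-k) * (1 - ((derivWithin g (Icc a b)) t) ^ 2) * coth (Real.sqrt (-k) * g t) := by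
  intro t₀ ht₀
  set s := Real.sqrt (-k)
  have hs : 0 < s := Real.sqrt_pos.2 (neg_pos.2 hk)
  have hg : DifferentiableOn ℝ g (Icc a b) := hC2.differentiableOn two_ne_zero
  have hg' : DifferentiableOn ℝ (derivWithin g (Icc a b)) (Icc a b) :=
    (hC2.derivWithin (uniqueDiffOn_Icc hab) le_rfl).differentiableOn one_ne_zero
  have hcosh_cont : ContinuousOn (fun t => -k * Real.cosh (s * g t)) (Icc a b) :=
    continuousOn_const.mul
      (Real.continuous_cosh.comp_continuousOn (continuousOn_const.mul hC2.continuousOn))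
  have hψ'' := (hasDerivWithinAt_sinh_const_mul_mul_derivWithin (hg t₀ ht₀) (hg' t₀ ht₀) s
    ).le_of_sub_le_integral hab ht₀ hcosh_cont fun t₁ ht₁ t₂ ht₂ h12 => by
      obtain ⟨u, v, hv, heq₁, heq₂, hle⟩ := hcmp t₁ t₂ ht₁.1 h12 ht₂.2
      have hsub : Icc t₁ t₂ ⊆ Icc a b := Icc_subset_Icc ht₁.1 ht₂.2
      exact cosh_deriv_sub_le_integral_of_gHyp_le hk hv h12 (hC2.continuousOn.mono hsub)
        (fun t ht => (hpos t (hsub ht)).le)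
        ((hasDerivWithinAt_cosh_const_mul (hg t₁ ht₁) s).mono hsub)
        ((hasDerivWithinAt_cosh_const_mul (hg t₂ ht₂) s).mono hsub) heq₁ heq₂ hle
  rw [← Real.sq_sqrt (neg_nonneg.2 hk.le)] at hψ''
  exact le_mul_one_sub_sq_mul_coth hs (mul_pos hs (hpos t₀ ht₀)) hψ''

theorem diff_ineq_rev_of_hyp_comparison (k : ℝ) (hk : k < 0) (a b : ℝ) (hab : a < b) (g : ℝ → ℝ)
    (hC2 : ContDiffOn ℝ 2 g (Icc a b))
    (hpos : ∀ t ∈ Icc a b, 0 < g t)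
    (hnonexp : ∀ t₁ ∈ Icc a b, ∀ t₂ ∈ Icc a b, |g t₁ - g t₂| ≤ |t₁ - t₂|)
    (hdistlike : ∀ t₁ ∈ Icc a b, ∀ t₂ ∈ Icc a b, |t₁ - t₂| ≤ g t₁ + g t₂)
    (hcmp : ∀ t₁ t₂, a ≤ t₁ → t₁ < t₂ → t₂ ≤ b → ∃ u v : ℝ, 0 < v ∧
      gHyp k u v t₁ = g t₁ ∧ gHyp k u v t₂ = g t₂ ∧
      ∀ t ∈ Icc t₁ t₂, g t ≥ gHyp k u v t) :
    ∀ t ∈ Icc a b, (derivWithin (derivWithin g (Icc a b)) (Icc a b)) t ≤ Real.sqrt (-k) * (1 - ((derivWithin g (Icc a b)) t) ^ 2) * coth (Real.sqrt (-k) * g t) :=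
  diff_ineq_rev_of_hyp_comparison_general k hk a b hab g hC2 hpos hcmp
end

section
/- Let k > 0 and let u, v ∈ ℝ satisfy u² + v² < 1/k. Define g_k : ℝ → ℝ by g_k(t) = (1/√k) · arccos( √k (u cos(√k t) + v sin(√k t)) ). Then for every t ∈ ℝ, g_k is twice differentiable at t and satisfies g_k''(t) = √k · (1 − (g_k'(t))²) · cot(√k · g_k(t)). -/
/-!
The function `w t = √k (u cos √k t + v sin √k t)` solves `w'' = -k w` and, by Cauchy–Schwarz,
stays in `(-1, 1)`, so `θ = arccos w` is smooth with `sin θ > 0`. Differentiating `w = cos θ`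
twice gives `-k cos θ = -θ'² cos θ - θ'' sin θ`, i.e. `θ'' = (k - θ'²) cot θ`, and rescaling
`g = θ / √k` turns this into the stated equation.
-/

/-- The spherical comparison function. -/
noncomputable def gSph (k u v t : ℝ) : ℝ :=
  (1 / Real.sqrt k) *
    Real.arccos (Real.sqrt k * (u * Real.cos (Real.sqrt k * t) + v * Real.sin (Real.sqrt k * t)))

open Real

theorem sq_mul_cos_add_mul_sin_le (u v x : ℝ) : (u * cos x + v * sin x) ^ 2 ≤ u ^ 2 + v ^ 2 := by
  nlinarith [sq_nonneg (u * sin x - v * cos x), sin_sq_add_cos_sq x]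

theorem hasDerivAt_mul_cos_add_mul_sin (a b s x : ℝ) :
    HasDerivAt (fun t => a * cos (s * t) + b * sin (s * t))
      (s * b * cos (s * x) + -(s * a) * sin (s * x)) x := by
  have hlin : HasDerivAt (fun t => s * t) s x := by simpa using (hasDerivAt_id x).const_mul s
  exact ((hlin.cos.const_mul a).add (hlin.sin.const_mul b)).congr_deriv (by ring)

theorem sin_arccos_pos {x : ℝ} (hx : x ∈ Set.Ioo (-1) 1) : 0 < sin (arccos x) :=
  sin_pos_of_mem_Ioo ⟨arccos_pos.2 hx.2, arccos_lt_pi.2 hx.1⟩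

theorem HasDerivAt.arccos {w : ℝ → ℝ} {w' x : ℝ} (hw : HasDerivAt w w' x)
    (hx : w x ∈ Set.Ioo (-1) 1) :
    HasDerivAt (fun t => arccos (w t)) (-w' / Real.sin (arccos (w x))) x := by
  refine ((hasDerivAt_arccos (by linarith [hx.1]) (by linarith [hx.2])).comp x hw).congr_deriv ?_
  rw [sin_arccos]
  ring

/-- With `θ = arccos w`, so that `θ' = -w' / sin θ`, this says `θ'' = (k - θ'²) cot θ`. -/
theorem hasDerivAt_deriv_arccos_comp {w w' : ℝ → ℝ} {k x : ℝ}
    (hw : ∀ t, HasDerivAt w (w' t) t) (hw' : HasDerivAt w' (-k * w x) x)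
    (hbound : ∀ t, w t ∈ Set.Ioo (-1) 1) :
    HasDerivAt (fun t => -w' t / sin (arccos (w t)))
      ((k - (-w' x / sin (arccos (w x))) ^ 2) * cot (arccos (w x))) x := by
  have hsin := sin_arccos_pos (hbound x)
  have hcos := cos_arccos (hbound x).1.le (hbound x).2.le
  refine (hw'.neg.div ((hw x).arccos (hbound x)).sin hsin.ne').congr_deriv ?_
  rw [cot_eq_cos_div_sin, hcos, Pi.neg_apply]
  field_simp

/-- For `k > 0` and `u² + v² < 1/k`, the spherical comparison function is twice differentiable
everywhere and satisfies `g_k'' = √k (1 - (g_k')²) cot(√k g_k)`. -/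
theorem spherical_comparison_ode (k u v : ℝ) (hk : 0 < k) (huv : u ^ 2 + v ^ 2 < 1 / k) :
    ∀ t : ℝ, DifferentiableAt ℝ (gSph k u v) t ∧ DifferentiableAt ℝ (deriv (gSph k u v)) t ∧
      deriv (deriv (gSph k u v)) t =
        Real.sqrt k * (1 - (deriv (gSph k u v) t) ^ 2) *
          Real.cot (Real.sqrt k * gSph k u v t) := by
  intro t
  set s := √k
  have hs : 0 < s := sqrt_pos.mpr hk
  have hs2 : s ^ 2 = k := sq_sqrt hk.le
  set w := fun t => s * u * cos (s * t) + s * v * sin (s * t)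
  set w' := fun t => s * (s * v) * cos (s * t) + -(s * (s * u)) * sin (s * t)
  have hw : ∀ t, HasDerivAt w (w' t) t := hasDerivAt_mul_cos_add_mul_sin _ _ s
  have hw' : ∀ t, HasDerivAt w' (-k * w t) t := fun t => by
    convert hasDerivAt_mul_cos_add_mul_sin _ _ s t using 1
    simp only [w, ← hs2]
    ring
  have hbound : ∀ t, w t ∈ Set.Ioo (-1) 1 := fun t => by
    have hsq : w t ^ 2 < 1 :=
      calc w t ^ 2 = k * (u * cos (s * t) + v * sin (s * t)) ^ 2 := by rw [← hs2]; ring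
        _ ≤ k * (u ^ 2 + v ^ 2) := by gcongr; exact sq_mul_cos_add_mul_sin_le _ _ _
        _ < k * (1 / k) := by gcongr
        _ = 1 := by field_simp
    exact abs_lt.mp ((sq_lt_one_iff_abs_lt_one _).mp hsq)
  have hg : gSph k u v = fun t => s⁻¹ * arccos (w t) := by
    ext t; simp only [gSph, w, one_div, mul_add, mul_assoc]
    rfl
  have hg' : deriv (gSph k u v) = fun t => s⁻¹ * (-w' t / sin (arccos (w t))) := by
    ext t; rw [hg]; exact (((hw t).arccos (hbound t)).const_mul _).deriv
  have hg'' := (hasDerivAt_deriv_arccos_comp hw (hw' t) hbound).const_mul s⁻¹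
  refine ⟨?_, ?_, ?_⟩
  · rw [hg]; exact (((hw t).arccos (hbound t)).const_mul _).differentiableAt
  · rw [hg']; exact hg''.differentiableAt
  · rw [hg', hg''.deriv, hg, mul_inv_cancel_left₀ hs.ne', ← hs2]
    field_simp
end

section
/- Let k > 0, let 0 ≤ a < b with √k · b < π/2, and let g : [a,b] → ℝ be a C², positive-valued, distance-like function with √k · g(t) < π/2 for all t ∈ [a,b]. Suppose g''(t) ≥ √k·(1 − (g'(t))²)·cot(√k·g(t)) for all t ∈ [a,b]. Then for all t₁, t₂ with a ≤ t₁ < t₂ ≤ b and all u, v ∈ ℝ with u² + v² < 1/k such that g_k(t₁; u, v) = g(t₁) and g_k(t₂; u, v) = g(t₂), one has g(t) ≤ g_k(t; u, v) for all t ∈ [t₁, t₂]. -/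
/-!
With `r = √k`, the differential inequality for `g` says exactly that `h = cos (r g)` satisfies
`h'' + k h ≤ 0` wherever `sin (r g) > 0`, while `cos (r gₖ) = r (u cos (r t) + v sin (r t))` solves
`f'' + k f = 0`. Their difference vanishes at `t₁` and `t₂`, so Sturm comparison with the positive
solution `cos (r (t - c))`, `c` the midpoint, shows it is nonnegative on `[t₁, t₂]`; this needs
`r (t₂ - t₁) < π`, which the distance-like property gives: `t₂ - t₁ ≤ g t₁ + g t₂ < π / r`.
As `arccos` is decreasing, `cos (r g) ≥ cos (r gₖ)` is `g ≤ gₖ`.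
-/

open Set

open Real

theorem nonneg_on_Icc_of_deriv_neg_imp_nonpos {q q' : ℝ → ℝ} {a b : ℝ}
    (hq : ContinuousOn q (Icc a b)) (hq' : ∀ x ∈ Ioo a b, HasDerivAt q (q' x) x)
    (hsign : ∀ x ∈ Ioo a b, ∀ y ∈ Ioo a b, x ≤ y → q' x < 0 → q' y ≤ 0)
    (ha : 0 ≤ q a) (hb : 0 ≤ q b) : ∀ t ∈ Icc a b, 0 ≤ q t := by
  intro m hm
  by_contra! hqm
  have ham : a < m := hm.1.lt_of_ne (by rintro rfl; linarith)
  have hmb : m < b := hm.2.lt_of_ne (by rintro rfl; linarith)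
  obtain ⟨c₁, hc₁, hslope₁⟩ := exists_hasDerivAt_eq_slope q q' ham
    (hq.mono (Icc_subset_Icc_right hmb.le)) fun x hx => hq' x ⟨hx.1, hx.2.trans hmb⟩
  obtain ⟨c₂, hc₂, hslope₂⟩ := exists_hasDerivAt_eq_slope q q' hmb
    (hq.mono (Icc_subset_Icc_left ham.le)) fun x hx => hq' x ⟨ham.trans hx.1, hx.2⟩
  have hneg : q' c₁ < 0 := by
    rw [hslope₁]; exact div_neg_of_neg_of_pos (by linarith) (by linarith)
  have hpos : 0 < q' c₂ := by
    rw [hslope₂]; exact div_pos (by linarith) (by linarith)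
  have := hsign c₁ ⟨hc₁.1, hc₁.2.trans hmb⟩ c₂ ⟨ham.trans hc₂.1, hc₂.2⟩ (hc₁.2.trans hc₂.1).le hneg
  linarith

theorem cos_mul_sub_midpoint_pos {r t₁ t₂ t : ℝ} (hr : 0 ≤ r) (hlen : r * (t₂ - t₁) < π)
    (ht : t ∈ Icc t₁ t₂) : 0 < cos (r * (t - (t₁ + t₂) / 2)) := by
  apply cos_pos_of_mem_Ioo
  constructor <;> nlinarith [ht.1, ht.2]

/-- Sturm comparison against a positive solution `s` of `s'' + k s = 0`: the quotient `w / s` has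
derivative `P / s²`, where the Wronskian `P = s w' - w s'` is antitone since `P' = s (w'' + k w)`. -/
theorem nonneg_on_Icc_of_pos_solution {k s s' w w' w'' : ℝ → ℝ} {t₁ t₂ : ℝ}
    (hs : ContinuousOn s (Icc t₁ t₂)) (hs_pos : ∀ x ∈ Icc t₁ t₂, 0 < s x)
    (hs' : ∀ x ∈ Ioo t₁ t₂, HasDerivAt s (s' x) x)
    (hs'' : ∀ x ∈ Ioo t₁ t₂, HasDerivAt s' (-(k x * s x)) x)
    (hw : ContinuousOn w (Icc t₁ t₂)) (hw' : ∀ x ∈ Ioo t₁ t₂, HasDerivAt w (w' x) x)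
    (hw'' : ∀ x ∈ Ioo t₁ t₂, HasDerivAt w' (w'' x) x)
    (hineq : ∀ x ∈ Ioo t₁ t₂, w'' x + k x * w x ≤ 0)
    (h₁ : 0 ≤ w t₁) (h₂ : 0 ≤ w t₂) : ∀ t ∈ Icc t₁ t₂, 0 ≤ w t := by
  intro t ht
  have h12 : t₁ ≤ t₂ := ht.1.trans ht.2
  set P : ℝ → ℝ := fun x => s x * w' x - w x * s' x
  have hP' : ∀ x ∈ Ioo t₁ t₂, HasDerivAt P (s x * (w'' x + k x * w x)) x := fun x hx =>
    (((hs' x hx).mul (hw'' x hx)).sub ((hw' x hx).mul (hs'' x hx))).congr_deriv (by ring)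
  have hP : AntitoneOn P (Ioo t₁ t₂) := by
    refine antitoneOn_of_hasDerivWithinAt_nonpos (f' := fun x => s x * (w'' x + k x * w x))
      (convex_Ioo t₁ t₂) (fun x hx => (hP' x hx).continuousAt.continuousWithinAt)
      (fun x hx => ?_) fun x hx => ?_ <;> simp only [interior_Ioo] at hx ⊢
    · exact (hP' x hx).hasDerivWithinAt
    · exact mul_nonpos_of_nonneg_of_nonpos (hs_pos x (Ioo_subset_Icc_self hx)).le (hineq x hx)
  have hq : ∀ x ∈ Ioo t₁ t₂, HasDerivAt (fun t => w t / s t) (P x / s x ^ 2) x := fun x hx =>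
    ((hw' x hx).div (hs' x hx) (hs_pos x (Ioo_subset_Icc_self hx)).ne').congr_deriv (by ring)
  have hsign : ∀ x ∈ Ioo t₁ t₂, ∀ y ∈ Ioo t₁ t₂, x ≤ y → P x / s x ^ 2 < 0 → P y / s y ^ 2 ≤ 0 :=
    fun x hx y hy hxy hneg => div_nonpos_of_nonpos_of_nonneg
      ((hP hx hy hxy).trans (neg_of_div_neg_left hneg (sq_nonneg _)).le) (sq_nonneg _)
  have hq_nonneg := nonneg_on_Icc_of_deriv_neg_imp_nonpos (hw.div hs fun x hx => (hs_pos x hx).ne')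
    hq hsign (div_nonneg h₁ (hs_pos t₁ (left_mem_Icc.2 h12)).le)
    (div_nonneg h₂ (hs_pos t₂ (right_mem_Icc.2 h12)).le) t ht
  simpa [(hs_pos t ht).ne'] using mul_nonneg hq_nonneg (hs_pos t ht).le

theorem nonneg_on_Icc_of_deriv2_add_mul_nonpos {k t₁ t₂ : ℝ} {w w' w'' : ℝ → ℝ} (hk : 0 ≤ k)
    (hlen : √k * (t₂ - t₁) < π) (hw : ContinuousOn w (Icc t₁ t₂))
    (hw' : ∀ x ∈ Ioo t₁ t₂, HasDerivAt w (w' x) x)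
    (hw'' : ∀ x ∈ Ioo t₁ t₂, HasDerivAt w' (w'' x) x)
    (hineq : ∀ x ∈ Ioo t₁ t₂, w'' x + k * w x ≤ 0)
    (h₁ : 0 ≤ w t₁) (h₂ : 0 ≤ w t₂) : ∀ t ∈ Icc t₁ t₂, 0 ≤ w t := by
  set c := (t₁ + t₂) / 2
  have hlin : ∀ t, HasDerivAt (fun t => √k * (t - c)) √k t := fun t => by
    simpa using ((hasDerivAt_id t).sub_const c).const_mul √k
  refine nonneg_on_Icc_of_pos_solution (k := fun _ => k) (s := fun t => cos (√k * (t - c)))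
    (s' := fun t => -(√k * sin (√k * (t - c)))) (by fun_prop)
    (fun t ht => cos_mul_sub_midpoint_pos (sqrt_nonneg k) hlen ht)
    (fun t _ => (hlin t).cos.congr_deriv (by ring))
    (fun t _ => ((hlin t).sin.const_mul √k).neg.congr_deriv ?_) hw hw' hw'' hineq h₁ h₂
  linear_combination (-cos (√k * (t - c))) * mul_self_sqrt hk

/-- At `y = r g`, `p = g'`, `z = g''` the left side is `(cos (r g))'' + r² cos (r g)`. -/
theorem deriv2_cos_comp_add_sq_mul_nonpos {r y p z : ℝ} (hr : 0 ≤ r) (hsin : 0 < sin y)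
    (h : r * (1 - p ^ 2) * cot y ≤ z) :
    -(r ^ 2 * cos y * p ^ 2 + r * sin y * z) + r ^ 2 * cos y ≤ 0 := by
  have key : r ^ 2 * (1 - p ^ 2) * cos y ≤ r * sin y * z := by
    calc r ^ 2 * (1 - p ^ 2) * cos y = r * sin y * (r * (1 - p ^ 2) * cot y) := by
          rw [cot_eq_cos_div_sin]; field_simp
      _ ≤ r * sin y * z := mul_le_mul_of_nonneg_left h (mul_nonneg hr hsin.le)
  linarith

section CosComp

variable {r x : ℝ} {g g' g'' : ℝ → ℝ}

theorem hasDerivAt_cos_mul_comp (hg : HasDerivAt g (g' x) x) :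
    HasDerivAt (fun t => cos (r * g t)) (-(r * sin (r * g x) * g' x)) x :=
  (hg.const_mul r).cos.congr_deriv (by ring)

theorem hasDerivAt_deriv_cos_mul_comp (hg : HasDerivAt g (g' x) x)
    (hg' : HasDerivAt g' (g'' x) x) :
    HasDerivAt (fun t => -(r * sin (r * g t) * g' t))
      (-(r ^ 2 * cos (r * g x) * g' x ^ 2 + r * sin (r * g x) * g'' x)) x :=
  (((hg.const_mul r).sin.const_mul r).mul hg').neg.congr_deriv (by ring)

end CosComp

theorem ContDiffOn.hasDerivAt_of_mem_Ioo {g : ℝ → ℝ} {a b x : ℝ}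
    (hg : ContDiffOn ℝ 2 g (Icc a b)) (hx : x ∈ Ioo a b) :
    HasDerivAt g (derivWithin g (Icc a b) x) x :=
  ((hg.differentiableOn (by norm_num)) x (Ioo_subset_Icc_self hx)).hasDerivWithinAt.hasDerivAt
    (Icc_mem_nhds hx.1 hx.2)

theorem ContDiffOn.hasDerivAt_derivWithin_of_mem_Ioo {g : ℝ → ℝ} {a b x : ℝ}
    (hg : ContDiffOn ℝ 2 g (Icc a b)) (hx : x ∈ Ioo a b) :
    HasDerivAt (derivWithin g (Icc a b))
      (derivWithin (derivWithin g (Icc a b)) (Icc a b) x) x := by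
  have hg' : ContDiffOn ℝ 1 (derivWithin g (Icc a b)) (Icc a b) :=
    hg.derivWithin (uniqueDiffOn_Icc (hx.1.trans hx.2)) (by norm_num)
  exact ((hg'.differentiableOn one_ne_zero) x (Ioo_subset_Icc_self hx)).hasDerivWithinAt.hasDerivAt
    (Icc_mem_nhds hx.1 hx.2)

/-- `cos (√k · gSph k u v t)`, a solution of `f'' + k f = 0`. -/
noncomputable def sphCos (k u v t : ℝ) : ℝ := √k * (u * cos (√k * t) + v * sin (√k * t))

section SphCos

variable {k u v t : ℝ}

theorem hasDerivAt_sphCos : HasDerivAt (sphCos k u v) (√k * sphCos k v (-u) t) t := by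
  have hlin : HasDerivAt (fun t => √k * t) √k t := by simpa using (hasDerivAt_id t).const_mul √k
  exact (((hlin.cos.const_mul u).add (hlin.sin.const_mul v)).const_mul √k).congr_deriv
    (by simp only [sphCos]; ring)

theorem hasDerivAt_sqrt_mul_sphCos (hk : 0 ≤ k) :
    HasDerivAt (fun t => √k * sphCos k v (-u) t) (-(k * sphCos k u v t)) t :=
  (hasDerivAt_sphCos.const_mul √k).congr_deriv <| by
    simp only [sphCos]
    linear_combination (-(√k * (u * cos (√k * t) + v * sin (√k * t)))) * mul_self_sqrt hk

theorem sphCos_sq_le (hk : 0 ≤ k) : sphCos k u v t ^ 2 ≤ k * (u ^ 2 + v ^ 2) := by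
  have hpyth := sin_sq_add_cos_sq (√k * t)
  have : (u * cos (√k * t) + v * sin (√k * t)) ^ 2 ≤ u ^ 2 + v ^ 2 := by
    nlinarith [sq_nonneg (u * sin (√k * t) - v * cos (√k * t))]
  simpa only [sphCos, mul_pow, sq_sqrt hk] using mul_le_mul_of_nonneg_left this hk

theorem abs_sphCos_le_one (hk : 0 < k) (huv : u ^ 2 + v ^ 2 < 1 / k) : |sphCos k u v t| ≤ 1 := by
  have : k * (u ^ 2 + v ^ 2) < 1 := by rwa [lt_div_iff₀ hk, mul_comm] at huv
  exact (sq_le_one_iff_abs_le_one _).1 ((sphCos_sq_le hk.le).trans this.le)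

theorem cos_sqrt_mul_of_gSph_eq (hk : 0 < k) (huv : u ^ 2 + v ^ 2 < 1 / k) {y : ℝ}
    (h : gSph k u v t = y) : cos (√k * y) = sphCos k u v t := by
  have hbound := abs_le.1 (abs_sphCos_le_one (t := t) hk huv)
  rw [← h, gSph, ← mul_assoc, mul_one_div_cancel (sqrt_pos.2 hk).ne', one_mul]
  exact cos_arccos hbound.1 hbound.2

theorem le_gSph_of_sphCos_le_cos (hk : 0 < k) {y : ℝ} (hy₀ : 0 ≤ √k * y) (hyπ : √k * y ≤ π)
    (h : sphCos k u v t ≤ cos (√k * y)) : y ≤ gSph k u v t := by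
  have hr := sqrt_pos.2 hk
  have : √k * y ≤ arccos (sphCos k u v t) := arccos_cos hy₀ hyπ ▸ arccos_le_arccos h
  rw [gSph, one_div, le_inv_mul_iff₀ hr]
  exact this

end SphCos

theorem sphCos_le_cos_mul_comp {k u v t₁ t₂ : ℝ} {g g' g'' : ℝ → ℝ} (hk : 0 ≤ k)
    (hlen : √k * (t₂ - t₁) < π) (hg : ContinuousOn g (Icc t₁ t₂))
    (hg' : ∀ x ∈ Ioo t₁ t₂, HasDerivAt g (g' x) x)
    (hg'' : ∀ x ∈ Ioo t₁ t₂, HasDerivAt g' (g'' x) x)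
    (hsin : ∀ x ∈ Ioo t₁ t₂, 0 < sin (√k * g x))
    (hineq : ∀ x ∈ Ioo t₁ t₂, √k * (1 - g' x ^ 2) * cot (√k * g x) ≤ g'' x)
    (h₁ : sphCos k u v t₁ ≤ cos (√k * g t₁)) (h₂ : sphCos k u v t₂ ≤ cos (√k * g t₂)) :
    ∀ t ∈ Icc t₁ t₂, sphCos k u v t ≤ cos (√k * g t) := by
  have hw := nonneg_on_Icc_of_deriv2_add_mul_nonpos (w := fun t => cos (√k * g t) - sphCos k u v t)
    (w' := fun t => -(√k * sin (√k * g t) * g' t) - √k * sphCos k v (-u) t)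
    (w'' := fun t => -(√k ^ 2 * cos (√k * g t) * g' t ^ 2 + √k * sin (√k * g t) * g'' t)
      + k * sphCos k u v t)
    hk hlen ?_ (fun x hx => ?_) (fun x hx => ?_) (fun x hx => ?_) (sub_nonneg.2 h₁) (sub_nonneg.2 h₂)
  · exact fun t ht => sub_nonneg.1 (hw t ht)
  · have : Continuous (sphCos k u v) :=
      continuous_iff_continuousAt.2 fun t => hasDerivAt_sphCos.continuousAt
    fun_prop
  · exact (hasDerivAt_cos_mul_comp (hg' x hx)).sub hasDerivAt_sphCos
  · exact ((hasDerivAt_deriv_cos_mul_comp (hg' x hx) (hg'' x hx)).sub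
      (hasDerivAt_sqrt_mul_sphCos hk)).congr_deriv (by ring)
  · have := deriv2_cos_comp_add_sq_mul_nonpos (sqrt_nonneg k) (hsin x hx) (hineq x hx)
    simp only [sq_sqrt hk] at this ⊢
    linarith

theorem sph_comparison_of_diff_ineq_general (k : ℝ) (hk : 0 < k) (a b : ℝ) (g : ℝ → ℝ)
    (hC2 : ContDiffOn ℝ 2 g (Icc a b))
    (hpos : ∀ t ∈ Icc a b, 0 < g t)
    (hdistlike : ∀ t₁ ∈ Icc a b, ∀ t₂ ∈ Icc a b, |t₁ - t₂| ≤ g t₁ + g t₂)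
    (hsmall : ∀ t ∈ Icc a b, Real.sqrt k * g t < Real.pi / 2)
    (hineq : ∀ t ∈ Icc a b, (derivWithin (derivWithin g (Icc a b)) (Icc a b)) t ≥ Real.sqrt k * (1 - ((derivWithin g (Icc a b)) t) ^ 2) * Real.cot (Real.sqrt k * g t)) :
    ∀ t₁ t₂, a ≤ t₁ → t₁ < t₂ → t₂ ≤ b → ∀ u v : ℝ, u ^ 2 + v ^ 2 < 1 / k →
      gSph k u v t₁ = g t₁ → gSph k u v t₂ = g t₂ →
      ∀ t ∈ Icc t₁ t₂, g t ≤ gSph k u v t := by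
  intro t₁ t₂ ht₁ h12 ht₂ u v huv he₁ he₂
  have hsub : Icc t₁ t₂ ⊆ Icc a b := Icc_subset_Icc ht₁ ht₂
  have hsub' : Ioo t₁ t₂ ⊆ Ioo a b := Ioo_subset_Ioo ht₁ ht₂
  have hsub'' : Ioo t₁ t₂ ⊆ Icc a b := hsub'.trans Ioo_subset_Icc_self
  have hmem₁ : t₁ ∈ Icc a b := hsub (left_mem_Icc.2 h12.le)
  have hmem₂ : t₂ ∈ Icc a b := hsub (right_mem_Icc.2 h12.le)
  have hrg : ∀ t ∈ Icc a b, 0 < √k * g t ∧ √k * g t < π := fun t ht =>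
    ⟨mul_pos (sqrt_pos.2 hk) (hpos t ht), by linarith [hsmall t ht, pi_pos]⟩
  have hlen : √k * (t₂ - t₁) < π := by
    have := hdistlike t₂ hmem₂ t₁ hmem₁
    rw [abs_of_pos (sub_pos.2 h12)] at this
    nlinarith [hsmall t₁ hmem₁, hsmall t₂ hmem₂, sqrt_nonneg k]
  have hcos := sphCos_le_cos_mul_comp hk.le hlen (hC2.continuousOn.mono hsub)
    (fun x hx => hC2.hasDerivAt_of_mem_Ioo (hsub' hx))
    (fun x hx => hC2.hasDerivAt_derivWithin_of_mem_Ioo (hsub' hx))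
    (fun x hx => sin_pos_of_pos_of_lt_pi (hrg x (hsub'' hx)).1 (hrg x (hsub'' hx)).2)
    (fun x hx => hineq x (hsub'' hx))
    (cos_sqrt_mul_of_gSph_eq hk huv he₁).ge (cos_sqrt_mul_of_gSph_eq hk huv he₂).ge
  intro t ht
  exact le_gSph_of_sphCos_le_cos hk (hrg t (hsub ht)).1.le (hrg t (hsub ht)).2.le (hcos t ht)

theorem sph_comparison_of_diff_ineq (k : ℝ) (hk : 0 < k) (a b : ℝ) (ha : 0 ≤ a) (hab : a < b)
    (hb : Real.sqrt k * b < Real.pi / 2) (g : ℝ → ℝ)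
    (hC2 : ContDiffOn ℝ 2 g (Icc a b))
    (hpos : ∀ t ∈ Icc a b, 0 < g t)
    (hnonexp : ∀ t₁ ∈ Icc a b, ∀ t₂ ∈ Icc a b, |g t₁ - g t₂| ≤ |t₁ - t₂|)
    (hdistlike : ∀ t₁ ∈ Icc a b, ∀ t₂ ∈ Icc a b, |t₁ - t₂| ≤ g t₁ + g t₂)
    (hsmall : ∀ t ∈ Icc a b, Real.sqrt k * g t < Real.pi / 2)
    (hineq : ∀ t ∈ Icc a b, (derivWithin (derivWithin g (Icc a b)) (Icc a b)) t ≥ Real.sqrt k * (1 - ((derivWithin g (Icc a b)) t) ^ 2) * Real.cot (Real.sqrt k * g t)) :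
    ∀ t₁ t₂, a ≤ t₁ → t₁ < t₂ → t₂ ≤ b → ∀ u v : ℝ, u ^ 2 + v ^ 2 < 1 / k →
      gSph k u v t₁ = g t₁ → gSph k u v t₂ = g t₂ →
      ∀ t ∈ Icc t₁ t₂, g t ≤ gSph k u v t :=
  sph_comparison_of_diff_ineq_general k hk a b g hC2 hpos hdistlike hsmall hineq
end

section
/- Let k > 0, let 0 ≤ a < b with √k · b < π/2, and let g : [a,b] → ℝ be a C², positive-valued, distance-like function with √k · g(t) < π/2 for all t ∈ [a,b]. Suppose g''(t) ≤ √k·(1 − (g'(t))²)·cot(√k·g(t)) for all t ∈ [a,b]. Then for all t₁, t₂ with a ≤ t₁ < t₂ ≤ b and all u, v ∈ ℝ with u² + v² < 1/k such that g_k(t₁; u, v) = g(t₁) and g_k(t₂; u, v) = g(t₂), one has g(t) ≥ g_k(t; u, v) for all t ∈ [t₁, t₂]. -/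
/-!
Write `s = √k` and `f t = s (u cos (s t) + v sin (s t))`, so that `gSph k u v = arccos ∘ f / s`
and `f'' + k f = 0`. For `h = cos (s g)` one computes
`h'' + k h = s² cos (s g) (1 - g'²) - s sin (s g) g''`, so the differential inequality for `g`
says that `w = f - h` is a supersolution, `w'' + k w ≤ 0`, and `w` vanishes at `t₁` and `t₂`.
As `s (t₂ - t₁) < π`, the solution `φ = cos (s (t - (t₁ + t₂) / 2))` of `φ'' + k φ = 0` is
positive on `[t₁, t₂]`, and the Wronskian `w' φ - w φ'` is antitone. Since `(w / φ)'` has the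
sign of the Wronskian, `w / φ` cannot dip below its zero boundary values, so `w ≥ 0`, i.e.
`cos (s g) ≤ f`, which is `g ≥ gSph k u v` because `arccos` is antitone.
-/

open Set

open Real

theorem nonneg_of_eq_zero_of_deriv_neg_imp_nonpos {q q' : ℝ → ℝ} {a b : ℝ}
    (hq : ContinuousOn q (Icc a b)) (hq' : ∀ x ∈ Ioo a b, HasDerivAt q (q' x) x)
    (hsign : ∀ x ∈ Ioo a b, ∀ y ∈ Ioo a b, x < y → q' x < 0 → q' y ≤ 0)
    (ha : q a = 0) (hb : q b = 0) : ∀ x ∈ Icc a b, 0 ≤ q x := by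
  intro x hx
  by_contra! hneg
  have hax : a < x := hx.1.lt_of_ne (by rintro rfl; linarith)
  have hxb : x < b := hx.2.lt_of_ne (by rintro rfl; linarith)
  obtain ⟨c, hc, hc_slope⟩ := exists_hasDerivAt_eq_slope q q' hax
    (hq.mono (Icc_subset_Icc_right hxb.le))
    (fun y hy => hq' y (Ioo_subset_Ioo_right hxb.le hy))
  obtain ⟨d, hd, hd_slope⟩ := exists_hasDerivAt_eq_slope q q' hxb
    (hq.mono (Icc_subset_Icc_left hax.le))
    (fun y hy => hq' y (Ioo_subset_Ioo_left hax.le hy))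
  have hc_neg : q' c < 0 := by
    rw [hc_slope, ha]; exact div_neg_of_neg_of_pos (by linarith) (by linarith)
  have hd_pos : 0 < q' d := by
    rw [hd_slope, hb]; exact div_pos (by linarith) (by linarith)
  have := hsign c (Ioo_subset_Ioo_right hxb.le hc) d (Ioo_subset_Ioo_left hax.le hd)
    (hc.2.trans hd.1) hc_neg
  linarith

theorem nonneg_of_deriv2_add_mul_nonpos {k t₁ t₂ : ℝ} {w w' w'' : ℝ → ℝ} (hk : 0 ≤ k)
    (hlen : √k * (t₂ - t₁) < π)
    (hw : ∀ x ∈ Icc t₁ t₂, HasDerivWithinAt w (w' x) (Icc t₁ t₂) x)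
    (hw' : ∀ x ∈ Icc t₁ t₂, HasDerivWithinAt w' (w'' x) (Icc t₁ t₂) x)
    (hsuper : ∀ x ∈ Icc t₁ t₂, w'' x + k * w x ≤ 0) (h₁ : w t₁ = 0) (h₂ : w t₂ = 0) :
    ∀ x ∈ Icc t₁ t₂, 0 ≤ w x := by
  set s := √k
  have hss : s * s = k := mul_self_sqrt hk
  set m := (t₁ + t₂) / 2
  set φ : ℝ → ℝ := fun x => cos (s * (x - m))
  set φ' : ℝ → ℝ := fun x => -sin (s * (x - m)) * s
  have hlin : ∀ x, HasDerivAt (fun x => s * (x - m)) s x := fun x => by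
    simpa using ((hasDerivAt_id x).sub_const m).const_mul s
  have hφ : ∀ x, HasDerivAt φ (φ' x) x := fun x => (hlin x).cos
  have hφ' : ∀ x, HasDerivAt φ' (-(k * φ x)) x := fun x => by
    refine (hlin x).sin.neg.mul_const s |>.congr_deriv ?_
    rw [← hss]; ring
  have hφ_pos : ∀ x ∈ Icc t₁ t₂, 0 < φ x := fun x hx => by
    have hs : 0 ≤ s := sqrt_nonneg k
    have hsx : s * (x - m) = (s * (x - t₁) - s * (t₂ - x)) / 2 := by ring
    apply cos_pos_of_mem_Ioo
    constructor <;>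
      nlinarith [mul_nonneg hs (sub_nonneg.2 hx.1), mul_nonneg hs (sub_nonneg.2 hx.2)]
  set W : ℝ → ℝ := fun x => w' x * φ x - w x * φ' x
  -- `φ'' = -kφ`, so the Wronskian of `w` and `φ` has derivative `(w'' + k w) φ`.
  have hW_deriv : ∀ x ∈ Icc t₁ t₂,
      HasDerivWithinAt W ((w'' x + k * w x) * φ x) (Icc t₁ t₂) x := fun x hx => by
    refine ((hw' x hx).mul (hφ x).hasDerivWithinAt).sub
      ((hw x hx).mul (hφ' x).hasDerivWithinAt) |>.congr_deriv ?_
    ring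
  have hW : AntitoneOn W (Icc t₁ t₂) := by
    refine antitoneOn_of_hasDerivWithinAt_nonpos (f' := fun x => (w'' x + k * w x) * φ x)
      (convex_Icc t₁ t₂)
      (fun x hx => (hW_deriv x hx).continuousWithinAt) (fun x hx => ?_) (fun x hx => ?_)
    · exact (hW_deriv x (interior_subset hx)).mono interior_subset
    · exact mul_nonpos_of_nonpos_of_nonneg (hsuper x (interior_subset hx))
        (hφ_pos x (interior_subset hx)).le
  have hq : ∀ x ∈ Ioo t₁ t₂, HasDerivAt (fun x => w x / φ x) (W x / φ x ^ 2) x := fun x hx =>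
    ((hw x (Ioo_subset_Icc_self hx)).hasDerivAt (Icc_mem_nhds hx.1 hx.2)).div (hφ x)
      (hφ_pos x (Ioo_subset_Icc_self hx)).ne'
  have hq_cont : ContinuousOn (fun x => w x / φ x) (Icc t₁ t₂) :=
    (fun x hx => (hw x hx).continuousWithinAt.div (hφ x).continuousAt.continuousWithinAt
      (hφ_pos x hx).ne')
  -- `w / φ` has derivative `W / φ²`, whose sign is that of the antitone `W`.
  have hsign : ∀ x ∈ Ioo t₁ t₂, ∀ y ∈ Ioo t₁ t₂, x < y → W x / φ x ^ 2 < 0 → W y / φ y ^ 2 ≤ 0 :=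
    fun x hx y hy hxy hWx => by
      have hWx' : W x < 0 := by
        by_contra! h; exact hWx.not_ge (div_nonneg h (sq_nonneg _))
      exact div_nonpos_of_nonpos_of_nonneg
        ((hW (Ioo_subset_Icc_self hx) (Ioo_subset_Icc_self hy) hxy.le).trans hWx'.le) (sq_nonneg _)
  intro x hx
  have := nonneg_of_eq_zero_of_deriv_neg_imp_nonpos hq_cont hq hsign (by simp [h₁]) (by simp [h₂])
    x hx
  simpa using (le_div_iff₀ (hφ_pos x hx)).1 this

noncomputable def sphArg (k u v t : ℝ) : ℝ := √k * (u * cos (√k * t) + v * sin (√k * t))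

theorem gSph_eq_arccos_sphArg (k u v t : ℝ) : gSph k u v t = 1 / √k * arccos (sphArg k u v t) :=
  rfl

theorem abs_sphArg_le_one {k u v : ℝ} (hk : 0 ≤ k) (huv : u ^ 2 + v ^ 2 ≤ 1 / k) (t : ℝ) :
    |sphArg k u v t| ≤ 1 := by
  set c := cos (√k * t)
  set s := sin (√k * t)
  have hcs : (u * c + v * s) ^ 2 ≤ u ^ 2 + v ^ 2 := by
    nlinarith [sq_nonneg (u * s - v * c), sin_sq_add_cos_sq (√k * t)]
  have hk1 : k * (1 / k) ≤ 1 := by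
    rcases hk.eq_or_lt with rfl | hk
    · simp
    · rw [mul_one_div_cancel hk.ne']
  rw [← sq_le_one_iff_abs_le_one, sphArg, mul_pow, sq_sqrt hk]
  calc k * (u * c + v * s) ^ 2 ≤ k * (1 / k) := mul_le_mul_of_nonneg_left (hcs.trans huv) hk
    _ ≤ 1 := hk1

theorem hasDerivAt_sphArg (k u v t : ℝ) :
    HasDerivAt (sphArg k u v) (√k * sphArg k v (-u) t) t := by
  have hlin : HasDerivAt (fun t => √k * t) √k t := by
    simpa using (hasDerivAt_id t).const_mul √k
  refine ((hlin.cos.const_mul u).add (hlin.sin.const_mul v)).const_mul √k |>.congr_deriv ?_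
  simp only [sphArg]; ring

theorem hasDerivAt_sqrt_mul_sphArg {k : ℝ} (hk : 0 ≤ k) (u v t : ℝ) :
    HasDerivAt (fun t => √k * sphArg k v (-u) t) (-(k * sphArg k u v t)) t := by
  refine (hasDerivAt_sphArg k v (-u) t).const_mul √k |>.congr_deriv ?_
  simp only [sphArg]
  linear_combination (-(√k * (u * cos (√k * t) + v * sin (√k * t)))) * mul_self_sqrt hk

theorem cos_sqrt_mul_eq_sphArg_of_gSph_eq {k u v t y : ℝ} (hk : 0 < k)
    (huv : u ^ 2 + v ^ 2 ≤ 1 / k) (h : gSph k u v t = y) : cos (√k * y) = sphArg k u v t := by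
  have hy : √k * y = arccos (sphArg k u v t) := by
    rw [← h, gSph_eq_arccos_sphArg]; field_simp
  obtain ⟨hlo, hhi⟩ := abs_le.1 (abs_sphArg_le_one hk.le huv t)
  rw [hy, cos_arccos hlo hhi]

theorem gSph_le_of_cos_le {k u v t y : ℝ} (hk : 0 < k) (hy₀ : 0 ≤ √k * y) (hyπ : √k * y ≤ π)
    (h : cos (√k * y) ≤ sphArg k u v t) : gSph k u v t ≤ y := by
  have hs : 0 < √k := sqrt_pos.2 hk
  calc gSph k u v t = 1 / √k * arccos (sphArg k u v t) := gSph_eq_arccos_sphArg k u v t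
    _ ≤ 1 / √k * arccos (cos (√k * y)) := by gcongr
    _ = y := by rw [arccos_cos hy₀ hyπ]; field_simp

theorem cos_sqrt_mul_le_sphArg_of_deriv2_le {k u v t₁ t₂ : ℝ} {g g' g'' : ℝ → ℝ} (hk : 0 ≤ k)
    (hlen : √k * (t₂ - t₁) < π)
    (hg : ∀ x ∈ Icc t₁ t₂, HasDerivWithinAt g (g' x) (Icc t₁ t₂) x)
    (hg' : ∀ x ∈ Icc t₁ t₂, HasDerivWithinAt g' (g'' x) (Icc t₁ t₂) x)
    (hsin : ∀ x ∈ Icc t₁ t₂, 0 < sin (√k * g x))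
    (hineq : ∀ x ∈ Icc t₁ t₂, g'' x ≤ √k * (1 - g' x ^ 2) * cot (√k * g x))
    (h₁ : cos (√k * g t₁) = sphArg k u v t₁) (h₂ : cos (√k * g t₂) = sphArg k u v t₂) :
    ∀ x ∈ Icc t₁ t₂, cos (√k * g x) ≤ sphArg k u v x := by
  set s := √k
  have hss : s * s = k := mul_self_sqrt hk
  have hcos : ∀ x ∈ Icc t₁ t₂, HasDerivWithinAt (fun x => cos (s * g x))
      (-sin (s * g x) * (s * g' x)) (Icc t₁ t₂) x := fun x hx => ((hg x hx).const_mul s).cos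
  have hcos' : ∀ x ∈ Icc t₁ t₂, HasDerivWithinAt (fun x => -sin (s * g x) * (s * g' x))
      (-(cos (s * g x) * (s * g' x)) * (s * g' x) + -sin (s * g x) * (s * g'' x))
      (Icc t₁ t₂) x := fun x hx =>
    ((hg x hx).const_mul s).sin.neg.mul ((hg' x hx).const_mul s)
  have hsuper : ∀ x ∈ Icc t₁ t₂,
      -(k * sphArg k u v x) - (-(cos (s * g x) * (s * g' x)) * (s * g' x) +
        -sin (s * g x) * (s * g'' x)) + k * (sphArg k u v x - cos (s * g x)) ≤ 0 := by
    intro x hx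
    have hmul : g'' x * sin (s * g x) ≤ s * (1 - g' x ^ 2) * cos (s * g x) := by
      have := hineq x hx
      rwa [cot_eq_cos_div_sin, mul_div_assoc', le_div_iff₀ (hsin x hx)] at this
    linear_combination mul_le_mul_of_nonneg_left hmul (sqrt_nonneg k) + cos (s * g x) * hss
  intro x hx
  have := nonneg_of_deriv2_add_mul_nonpos (w := fun x => sphArg k u v x - cos (s * g x)) hk hlen
    (fun x hx => (hasDerivAt_sphArg k u v x).hasDerivWithinAt.sub (hcos x hx))
    (fun x hx => (hasDerivAt_sqrt_mul_sphArg hk u v x).hasDerivWithinAt.sub (hcos' x hx))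
    hsuper (by simp [h₁]) (by simp [h₂]) x hx
  simpa using this

theorem sph_comparison_of_diff_ineq_rev_general (k : ℝ) (hk : 0 < k) (a b : ℝ) (ha : 0 ≤ a)
    (hb : Real.sqrt k * b < Real.pi / 2) (g : ℝ → ℝ)
    (hC2 : ContDiffOn ℝ 2 g (Icc a b))
    (hpos : ∀ t ∈ Icc a b, 0 < g t)
    (hsmall : ∀ t ∈ Icc a b, Real.sqrt k * g t < Real.pi / 2)
    (hineq : ∀ t ∈ Icc a b, (derivWithin (derivWithin g (Icc a b)) (Icc a b)) t ≤ Real.sqrt k * (1 - ((derivWithin g (Icc a b)) t) ^ 2) * Real.cot (Real.sqrt k * g t)) :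
    ∀ t₁ t₂, a ≤ t₁ → t₁ < t₂ → t₂ ≤ b → ∀ u v : ℝ, u ^ 2 + v ^ 2 < 1 / k →
      gSph k u v t₁ = g t₁ → gSph k u v t₂ = g t₂ →
      ∀ t ∈ Icc t₁ t₂, g t ≥ gSph k u v t := by
  intro t₁ t₂ ht₁ h₁₂ ht₂ u v huv hgt₁ hgt₂ t ht
  set I := Icc a b
  have hJI : Icc t₁ t₂ ⊆ I := Icc_subset_Icc ht₁ ht₂
  have hg : ∀ x ∈ I, HasDerivWithinAt g (derivWithin g I x) I x := fun x hx =>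
    (hC2.differentiableOn (by norm_num) x hx).hasDerivWithinAt
  have hg' : ∀ x ∈ I,
      HasDerivWithinAt (derivWithin g I) (derivWithin (derivWithin g I) I x) I x := fun x hx =>
    ((hC2.derivWithin (uniqueDiffOn_Icc (by linarith)) (m := 1) (by norm_num)).differentiableOn
      (by norm_num) x hx).hasDerivWithinAt
  have hsg : ∀ x ∈ I, 0 < √k * g x ∧ √k * g x < π := fun x hx =>
    ⟨mul_pos (sqrt_pos.2 hk) (hpos x hx), by linarith [hsmall x hx, pi_pos]⟩
  have hlen : √k * (t₂ - t₁) < π := by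
    nlinarith [mul_nonneg (sqrt_nonneg k) (ha.trans ht₁),
      mul_le_mul_of_nonneg_left ht₂ (sqrt_nonneg k), pi_pos]
  have hcos := cos_sqrt_mul_le_sphArg_of_deriv2_le hk.le hlen
    (fun x hx => (hg x (hJI hx)).mono hJI) (fun x hx => (hg' x (hJI hx)).mono hJI)
    (fun x hx => sin_pos_of_pos_of_lt_pi (hsg x (hJI hx)).1 (hsg x (hJI hx)).2)
    (fun x hx => hineq x (hJI hx))
    (cos_sqrt_mul_eq_sphArg_of_gSph_eq hk huv.le hgt₁)
    (cos_sqrt_mul_eq_sphArg_of_gSph_eq hk huv.le hgt₂)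
  exact gSph_le_of_cos_le hk (hsg t (hJI ht)).1.le (hsg t (hJI ht)).2.le (hcos t ht)

theorem sph_comparison_of_diff_ineq_rev (k : ℝ) (hk : 0 < k) (a b : ℝ) (ha : 0 ≤ a) (hab : a < b)
    (hb : Real.sqrt k * b < Real.pi / 2) (g : ℝ → ℝ)
    (hC2 : ContDiffOn ℝ 2 g (Icc a b))
    (hpos : ∀ t ∈ Icc a b, 0 < g t)
    (hnonexp : ∀ t₁ ∈ Icc a b, ∀ t₂ ∈ Icc a b, |g t₁ - g t₂| ≤ |t₁ - t₂|)
    (hdistlike : ∀ t₁ ∈ Icc a b, ∀ t₂ ∈ Icc a b, |t₁ - t₂| ≤ g t₁ + g t₂)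
    (hsmall : ∀ t ∈ Icc a b, Real.sqrt k * g t < Real.pi / 2)
    (hineq : ∀ t ∈ Icc a b, (derivWithin (derivWithin g (Icc a b)) (Icc a b)) t ≤ Real.sqrt k * (1 - ((derivWithin g (Icc a b)) t) ^ 2) * Real.cot (Real.sqrt k * g t)) :
    ∀ t₁ t₂, a ≤ t₁ → t₁ < t₂ → t₂ ≤ b → ∀ u v : ℝ, u ^ 2 + v ^ 2 < 1 / k →
      gSph k u v t₁ = g t₁ → gSph k u v t₂ = g t₂ →
      ∀ t ∈ Icc t₁ t₂, g t ≥ gSph k u v t :=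
  sph_comparison_of_diff_ineq_rev_general k hk a b ha hb g hC2 hpos hsmall hineq
end

section
/- Let k > 0, let 0 ≤ a < b with √k · b < π/2, and let g : [a,b] → ℝ be a C², positive-valued, distance-like function with √k · g(t) < π/2 for all t ∈ [a,b]. Suppose that for every t₁, t₂ with a ≤ t₁ < t₂ ≤ b there exist u, v ∈ ℝ with u² + v² < 1/k, g_k(t₁; u, v) = g(t₁), g_k(t₂; u, v) = g(t₂), and g(t) ≥ g_k(t; u, v) for all t ∈ [t₁, t₂]. Then g''(t) ≤ √k·(1 − (g'(t))²)·cot(√k·g(t)) holds for all t ∈ [a,b]. -/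
/-
Every comparison function `φ = gSph k u v` solves the ODE `φ'' = F(φ', φ)` with
`F(x, y) = √k (1 - x²) cot (√k y)`. On a short interval `[t₁, t₂]` around `t₀` the hypothesis
provides such a `φ` touching `g` from below at both ends, so `φ'(t₁) ≤ g'(t₁)` and
`g'(t₂) ≤ φ'(t₂)`, and two applications of the mean value theorem give
`g''(ξ) ≤ φ''(ζ) = F(φ'(ζ), φ(ζ))` for some `ξ, ζ ∈ (t₁, t₂)`. On that interval `φ` stays
close to `g(t₀) > 0`, so `0 ≤ φ'' ≤ C` for a constant `C` independent of the interval; hence `φ'`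
is monotone and `φ'(ζ)` is squeezed between `g'(t₂) - C (t₂ - t₁)` and `g'(t₁) + C (t₂ - t₁)`.
As the interval shrinks, `(ξ, φ'(ζ), φ(ζ)) → (t₀, g'(t₀), g(t₀))`, and continuity of `g''`
and `F` yields `g''(t₀) ≤ F(g'(t₀), g(t₀))`.
-/

open Set

open Real

theorem le_of_mem_closure_setOf_le {X Y α : Type*} [TopologicalSpace X] [TopologicalSpace Y]
    [TopologicalSpace α] [Preorder α] [OrderClosedTopology α] {f : X → α} {h : Y → α}
    {s : Set X} {x : X} {y : Y} (hf : ContinuousWithinAt f s x) (hh : ContinuousAt h y)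
    (hxy : (x, y) ∈ closure {p : X × Y | p.1 ∈ s ∧ f p.1 ≤ h p.2}) : f x ≤ h y :=
  ContinuousWithinAt.closure_le (f := fun p : X × Y => f p.1) (g := fun p : X × Y => h p.2) hxy
    (hf.comp continuousAt_fst.continuousWithinAt fun _ hp => hp.1)
    (hh.comp continuousAt_snd).continuousWithinAt fun _ hp => hp.2

theorem IsMinOn.hasDerivWithinAt_nonneg_of_left {f : ℝ → ℝ} {f' a b : ℝ} (hab : a < b)
    (hmin : IsMinOn f (Icc a b) a) (hf : HasDerivWithinAt f f' (Icc a b) a) : 0 ≤ f' := by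
  have := hmin.localize.hasFDerivWithinAt_nonneg hf.hasFDerivWithinAt
    (sub_mem_posTangentConeAt_of_segment_subset (segment_eq_Icc hab.le).subset)
  rw [ContinuousLinearMap.toSpanSingleton_apply, smul_eq_mul] at this
  exact nonneg_of_mul_nonneg_right this (sub_pos.2 hab)

theorem IsMinOn.hasDerivWithinAt_nonpos_of_right {f : ℝ → ℝ} {f' a b : ℝ} (hab : a < b)
    (hmin : IsMinOn f (Icc a b) b) (hf : HasDerivWithinAt f f' (Icc a b) b) : f' ≤ 0 := by
  have := hmin.localize.hasFDerivWithinAt_nonneg hf.hasFDerivWithinAt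
    (sub_mem_posTangentConeAt_of_segment_subset
      ((segment_symm ℝ b a).trans (segment_eq_Icc hab.le)).subset)
  rw [ContinuousLinearMap.toSpanSingleton_apply, smul_eq_mul] at this
  exact nonpos_of_mul_nonneg_right this (sub_neg.2 hab)

theorem exists_deriv2_le_of_touch_below {g g' g'' φ φ' φ'' : ℝ → ℝ} {t₁ t₂ : ℝ} (h12 : t₁ < t₂)
    (hg : ∀ t ∈ Icc t₁ t₂, HasDerivWithinAt g (g' t) (Icc t₁ t₂) t)
    (hg'c : ContinuousOn g' (Icc t₁ t₂)) (hg' : ∀ t ∈ Ioo t₁ t₂, HasDerivAt g' (g'' t) t)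
    (hφ : ∀ t, HasDerivAt φ (φ' t) t) (hφ' : ∀ t, HasDerivAt φ' (φ'' t) t)
    (hφ'' : ∀ t ∈ Icc t₁ t₂, 0 ≤ φ'' t)
    (hle : ∀ t ∈ Icc t₁ t₂, φ t ≤ g t) (h₁ : φ t₁ = g t₁) (h₂ : φ t₂ = g t₂) :
    ∃ ξ ∈ Ioo t₁ t₂, ∃ ζ ∈ Ioo t₁ t₂, g'' ξ ≤ φ'' ζ ∧
      g' t₂ - φ'' ζ * (t₂ - t₁) ≤ φ' ζ ∧ φ' ζ ≤ g' t₁ + φ'' ζ * (t₂ - t₁) := by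
  have hmem₁ : t₁ ∈ Icc t₁ t₂ := left_mem_Icc.2 h12.le
  have hmem₂ : t₂ ∈ Icc t₁ t₂ := right_mem_Icc.2 h12.le
  have hmin : ∀ t₀ ∈ Icc t₁ t₂, φ t₀ = g t₀ → IsMinOn (g - φ) (Icc t₁ t₂) t₀ :=
    fun t₀ _ h t ht => by simp [h, hle t ht]
  have hleft : φ' t₁ ≤ g' t₁ := sub_nonneg.1 <| (hmin t₁ hmem₁ h₁).hasDerivWithinAt_nonneg_of_left
    h12 ((hg t₁ hmem₁).sub (hφ t₁).hasDerivWithinAt)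
  have hright : g' t₂ ≤ φ' t₂ := sub_nonpos.1 <| (hmin t₂ hmem₂ h₂).hasDerivWithinAt_nonpos_of_right
    h12 ((hg t₂ hmem₂).sub (hφ t₂).hasDerivWithinAt)
  have hφ'c : Continuous φ' := continuous_iff_continuousAt.2 fun t => (hφ' t).continuousAt
  have hmono : MonotoneOn φ' (Icc t₁ t₂) :=
    monotoneOn_of_hasDerivWithinAt_nonneg (convex_Icc t₁ t₂) hφ'c.continuousOn
      (fun t _ => (hφ' t).hasDerivWithinAt) fun t ht => hφ'' t (interior_subset ht)
  obtain ⟨ξ, hξ, hξeq⟩ := exists_hasDerivAt_eq_slope g' g'' h12 hg'c hg'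
  obtain ⟨ζ, hζ, hζeq⟩ :=
    exists_hasDerivAt_eq_slope φ' φ'' h12 hφ'c.continuousOn fun t _ => hφ' t
  rw [eq_div_iff (sub_pos.2 h12).ne'] at hξeq hζeq
  have hζ₁ := hmono hmem₁ (Ioo_subset_Icc_self hζ) hζ.1.le
  have hζ₂ := hmono (Ioo_subset_Icc_self hζ) hmem₂ hζ.2.le
  refine ⟨ξ, hξ, ζ, hζ, le_of_mul_le_mul_right ?_ (sub_pos.2 h12), by linarith, by linarith⟩
  linarith

theorem LipschitzWith.dist_le_add_of_eq {α β : Type*} [PseudoMetricSpace α]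
    [PseudoMetricSpace β] {φ g : α → β} {x₀ x₁ : α} (hφ : LipschitzWith 1 φ) (h : φ x₁ = g x₁)
    (hg : dist (g x₁) (g x₀) ≤ dist x₁ x₀) (x : α) :
    dist (φ x) (g x₀) ≤ dist x x₁ + dist x₁ x₀ := calc
  dist (φ x) (g x₀) ≤ dist (φ x) (φ x₁) + dist (g x₁) (g x₀) := h ▸ dist_triangle _ _ _
  _ ≤ dist x x₁ + dist x₁ x₀ := add_le_add (by simpa using hφ.dist_le_mul x x₁) hg

theorem exists_mem_Icc_subset_Icc_sub_eq {a b t₀ Δ : ℝ} (ht₀ : t₀ ∈ Icc a b) (hΔ : 0 ≤ Δ)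
    (hΔab : Δ ≤ b - a) : ∃ t₁ t₂, a ≤ t₁ ∧ t₂ ≤ b ∧ t₀ ∈ Icc t₁ t₂ ∧ t₂ - t₁ = Δ := by
  refine ⟨min t₀ (b - Δ), min t₀ (b - Δ) + Δ, le_min ht₀.1 (by linarith), ?_,
    ⟨min_le_left _ _, ?_⟩, by ring⟩ <;>
  rcases min_cases t₀ (b - Δ) with h | h <;> linarith [ht₀.2]

/-- `sphA = cos (√k · gSph)` and `sphA' = √k · sphB`. -/
noncomputable def sphA (k u v t : ℝ) : ℝ := √k * (u * cos (√k * t) + v * sin (√k * t))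

noncomputable def sphB (k u v t : ℝ) : ℝ := √k * (-u * sin (√k * t) + v * cos (√k * t))

noncomputable def gSphDeriv (k u v t : ℝ) : ℝ := -sphB k u v t / √(1 - sphA k u v t ^ 2)

/-- The right-hand side `F(x, y)` of the ODE `φ'' = F(φ', φ)` solved by every `gSph k u v`. -/
noncomputable def sphRhs (k x y : ℝ) : ℝ := √k * (1 - x ^ 2) * cot (√k * y)

section Calculus

variable {k : ℝ} (u v : ℝ)

theorem sphA_sq_add_sphB_sq (hk : 0 ≤ k) (t : ℝ) :
    sphA k u v t ^ 2 + sphB k u v t ^ 2 = k * (u ^ 2 + v ^ 2) := by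
  have := sin_sq_add_cos_sq (√k * t)
  simp only [sphA, sphB, mul_pow, sq_sqrt hk]
  linear_combination k * (u ^ 2 + v ^ 2) * this

theorem hasDerivAt_sphA (t : ℝ) : HasDerivAt (sphA k u v) (√k * sphB k u v t) t := by
  have hlin := (hasDerivAt_id' t).const_mul √k
  refine ((((hlin.cos).const_mul u).add ((hlin.sin).const_mul v)).const_mul √k).congr_deriv ?_
  rw [sphB]; ring

theorem hasDerivAt_sphB (t : ℝ) : HasDerivAt (sphB k u v) (-(√k * sphA k u v t)) t := by
  have hlin := (hasDerivAt_id' t).const_mul √k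
  refine ((((hlin.sin).const_mul (-u)).add ((hlin.cos).const_mul v)).const_mul √k).congr_deriv ?_
  rw [sphA]; ring

variable {u v}

theorem sphA_sq_lt_one (hk : 0 ≤ k) (huv : k * (u ^ 2 + v ^ 2) < 1) (t : ℝ) :
    sphA k u v t ^ 2 < 1 := by
  nlinarith [sphA_sq_add_sphB_sq u v hk t, sq_nonneg (sphB k u v t)]

theorem sqrt_mul_gSph (hk : 0 < k) (t : ℝ) : √k * gSph k u v t = arccos (sphA k u v t) := by
  rw [gSph, ← mul_assoc, mul_one_div_cancel (sqrt_pos.2 hk).ne', one_mul]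
  rfl

theorem hasDerivAt_gSph (hk : 0 < k) (huv : k * (u ^ 2 + v ^ 2) < 1) (t : ℝ) :
    HasDerivAt (gSph k u v) (gSphDeriv k u v t) t := by
  have hA := sphA_sq_lt_one hk.le huv t
  have harccos := hasDerivAt_arccos (x := sphA k u v t) (by nlinarith) (by nlinarith)
  refine ((harccos.comp t (hasDerivAt_sphA u v t)).const_mul (1 / √k)).congr_deriv ?_
  rw [gSphDeriv]
  field_simp

theorem gSphDeriv_sq_le_one (hk : 0 ≤ k) (huv : k * (u ^ 2 + v ^ 2) < 1) (t : ℝ) :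
    gSphDeriv k u v t ^ 2 ≤ 1 := by
  have hA : 0 < 1 - sphA k u v t ^ 2 := sub_pos.2 (sphA_sq_lt_one hk huv t)
  rw [gSphDeriv, div_pow, neg_sq, sq_sqrt hA.le, div_le_one hA]
  linarith [sphA_sq_add_sphB_sq u v hk t]

theorem lipschitzWith_one_gSph (hk : 0 < k) (huv : k * (u ^ 2 + v ^ 2) < 1) :
    LipschitzWith 1 (gSph k u v) := by
  refine lipschitzWith_of_nnnorm_deriv_le (fun t => (hasDerivAt_gSph hk huv t).differentiableAt)
    fun t => ?_
  rw [(hasDerivAt_gSph hk huv t).deriv, ← NNReal.coe_le_coe, coe_nnnorm, norm_eq_abs,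
    NNReal.coe_one, ← sq_le_one_iff_abs_le_one]
  exact gSphDeriv_sq_le_one hk.le huv t

theorem hasDerivAt_gSphDeriv (hk : 0 < k) (huv : k * (u ^ 2 + v ^ 2) < 1) (t : ℝ) :
    HasDerivAt (gSphDeriv k u v) (sphRhs k (gSphDeriv k u v t) (gSph k u v t)) t := by
  set A := sphA k u v t with hAdef
  have hA : 0 < 1 - A ^ 2 := sub_pos.2 (sphA_sq_lt_one hk.le huv t)
  have hS0 : 0 < √(1 - A ^ 2) := sqrt_pos.2 hA
  have hinner : HasDerivAt (fun s => 1 - sphA k u v s ^ 2) (-(2 * A * (√k * sphB k u v t))) t :=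
    (((hasDerivAt_sphA u v t).pow 2).const_sub 1).congr_deriv (by ring)
  have hden := hinner.sqrt hA.ne'
  refine ((hasDerivAt_sphB (k := k) u v t).neg.div hden hS0.ne').congr_deriv ?_
  rw [sphRhs, sqrt_mul_gSph hk, cot_eq_cos_div_sin, cos_arccos (by nlinarith) (by nlinarith),
    sin_arccos, gSphDeriv, Pi.neg_apply, ← hAdef]
  field_simp

end Calculus

namespace Real

theorem cot_nonneg {x : ℝ} (h0 : 0 ≤ x) (h1 : x ≤ π / 2) : 0 ≤ cot x := by
  rw [cot_eq_cos_div_sin]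
  exact div_nonneg (cos_nonneg_of_mem_Icc ⟨by linarith [pi_pos], h1⟩)
    (sin_nonneg_of_nonneg_of_le_pi h0 (by linarith [pi_pos]))

theorem cot_le_one_div_sin {x y : ℝ} (hx : 0 < x) (hxy : x ≤ y) (hy : y ≤ π / 2) :
    cot y ≤ 1 / sin x := by
  have hsx : 0 < sin x := sin_pos_of_pos_of_lt_pi hx (by linarith [pi_pos])
  have hsin : sin x ≤ sin y :=
    sin_le_sin_of_le_of_le_pi_div_two (by linarith [pi_pos]) hy hxy
  rw [cot_eq_cos_div_sin]
  exact div_le_div₀ zero_le_one (cos_le_one y) hsx hsin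

end Real

section SphRhs

variable {k : ℝ}

theorem sphRhs_nonneg {x y : ℝ} (hx : x ^ 2 ≤ 1) (hy : 0 ≤ y) (hy' : √k * y ≤ π / 2) :
    0 ≤ sphRhs k x y :=
  mul_nonneg (mul_nonneg (sqrt_nonneg k) (sub_nonneg.2 hx)) (cot_nonneg (by positivity) hy')

theorem sphRhs_le (hk : 0 < k) {c x y : ℝ} (hc : 0 < c) (hcy : c ≤ y) (hy : √k * y ≤ π / 2) :
    sphRhs k x y ≤ √k / sin (√k * c) := by
  have hkc : 0 < √k * c := mul_pos (sqrt_pos.2 hk) hc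
  have hky : √k * c ≤ √k * y := mul_le_mul_of_nonneg_left hcy (sqrt_nonneg k)
  have hcot := cot_le_one_div_sin hkc hky hy
  have hcot0 := cot_nonneg (hkc.le.trans hky) hy
  calc sphRhs k x y ≤ √k * 1 * cot (√k * y) := by
        rw [sphRhs]; gcongr; linarith [sq_nonneg x]
    _ ≤ √k * 1 * (1 / sin (√k * c)) := by gcongr
    _ = √k / sin (√k * c) := by ring

theorem continuousAt_sphRhs {x y : ℝ} (hy : sin (√k * y) ≠ 0) :
    ContinuousAt (fun p : ℝ × ℝ => sphRhs k p.1 p.2) (x, y) := by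
  simp only [sphRhs, cot_eq_cos_div_sin]
  fun_prop (disch := exact hy)

end SphRhs

section Comparison

variable {k u v : ℝ}

theorem exists_deriv2_le_sphRhs_of_touch (hk : 0 < k) (huv : k * (u ^ 2 + v ^ 2) < 1)
    {g g' g'' : ℝ → ℝ} {t₁ t₂ c : ℝ} (h12 : t₁ < t₂)
    (hg : ∀ t ∈ Icc t₁ t₂, HasDerivWithinAt g (g' t) (Icc t₁ t₂) t)
    (hg'c : ContinuousOn g' (Icc t₁ t₂)) (hg' : ∀ t ∈ Ioo t₁ t₂, HasDerivAt g' (g'' t) t)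
    (hle : ∀ t ∈ Icc t₁ t₂, gSph k u v t ≤ g t) (h₁ : gSph k u v t₁ = g t₁)
    (h₂ : gSph k u v t₂ = g t₂) (hc : 0 < c) (hcφ : ∀ t ∈ Icc t₁ t₂, c ≤ gSph k u v t)
    (hφπ : ∀ t ∈ Icc t₁ t₂, √k * gSph k u v t ≤ π / 2) :
    ∃ ξ ∈ Ioo t₁ t₂, ∃ ζ ∈ Ioo t₁ t₂, g'' ξ ≤ sphRhs k (gSphDeriv k u v ζ) (gSph k u v ζ) ∧
      g' t₂ - √k / sin (√k * c) * (t₂ - t₁) ≤ gSphDeriv k u v ζ ∧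
      gSphDeriv k u v ζ ≤ g' t₁ + √k / sin (√k * c) * (t₂ - t₁) := by
  obtain ⟨ξ, hξ, ζ, hζ, hξζ, hlo, hhi⟩ := exists_deriv2_le_of_touch_below
    (φ'' := fun t => sphRhs k (gSphDeriv k u v t) (gSph k u v t)) h12 hg hg'c hg'
    (hasDerivAt_gSph hk huv) (hasDerivAt_gSphDeriv hk huv)
    (fun t ht => sphRhs_nonneg (gSphDeriv_sq_le_one hk.le huv t) (hc.le.trans (hcφ t ht))
      (hφπ t ht)) hle h₁ h₂
  have hζI := Ioo_subset_Icc_self hζ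
  have hbound := mul_le_mul_of_nonneg_right (sphRhs_le (x := gSphDeriv k u v ζ) hk hc
    (hcφ ζ hζI) (hφπ ζ hζI)) (sub_pos.2 h12).le
  exact ⟨ξ, hξ, ζ, hζ, hξζ, by linarith, by linarith⟩

theorem mem_closure_deriv2_le_sphRhs (hk : 0 < k) {a b t₀ : ℝ} {g g' g'' : ℝ → ℝ}
    (hab : a < b) (hg : ∀ t ∈ Icc a b, HasDerivWithinAt g (g' t) (Icc a b) t)
    (hg'c : ContinuousOn g' (Icc a b)) (hg' : ∀ t ∈ Ioo a b, HasDerivAt g' (g'' t) t)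
    (hnonexp : ∀ t₁ ∈ Icc a b, ∀ t₂ ∈ Icc a b, |g t₁ - g t₂| ≤ |t₁ - t₂|)
    (hsmall : ∀ t ∈ Icc a b, √k * g t < π / 2)
    (hcmp : ∀ t₁ t₂, a ≤ t₁ → t₁ < t₂ → t₂ ≤ b → ∃ u v : ℝ, u ^ 2 + v ^ 2 < 1 / k ∧
      gSph k u v t₁ = g t₁ ∧ gSph k u v t₂ = g t₂ ∧ ∀ t ∈ Icc t₁ t₂, g t ≥ gSph k u v t)
    (ht₀ : t₀ ∈ Icc a b) (hpos : 0 < g t₀) :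
    (t₀, g' t₀, g t₀) ∈
      closure {p : ℝ × ℝ × ℝ | p.1 ∈ Icc a b ∧ g'' p.1 ≤ sphRhs k p.2.1 p.2.2} := by
  rw [Metric.mem_closure_iff]
  intro ε hε
  set K := √k / sin (√k * (g t₀ / 2))
  have hK : 0 < K := div_pos (sqrt_pos.2 hk)
    (sin_pos_of_pos_of_lt_pi (by positivity) (by linarith [hsmall t₀ ht₀, pi_pos]))
  obtain ⟨r, hr, hg'r⟩ := Metric.continuousWithinAt_iff.1 (hg'c t₀ ht₀) (ε / 2) (half_pos hε)
  obtain ⟨Δ, hΔ, hΔlt⟩ := exists_between <|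
    lt_min (lt_min (half_pos hε) (div_pos hε (mul_pos two_pos hK)))
      (lt_min hr (lt_min (by positivity : 0 < g t₀ / 4) (sub_pos.2 hab)))
  simp only [lt_min_iff] at hΔlt
  obtain ⟨⟨hΔε, hΔK⟩, hΔr, hΔg, hΔab⟩ := hΔlt
  obtain ⟨t₁, t₂, ha₁, hb₂, ht₀₁₂, hΔeq⟩ := exists_mem_Icc_subset_Icc_sub_eq ht₀ hΔ.le hΔab.le
  have h12 : t₁ < t₂ := by linarith
  have ht₁ : t₁ ∈ Icc t₁ t₂ := left_mem_Icc.2 h12.le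
  have ht₂ : t₂ ∈ Icc t₁ t₂ := right_mem_Icc.2 h12.le
  have hsub : Icc t₁ t₂ ⊆ Icc a b := Icc_subset_Icc ha₁ hb₂
  have hnear : ∀ t ∈ Icc t₁ t₂, dist t t₀ ≤ Δ := fun t ht => hΔeq ▸ dist_le_of_mem_Icc ht ht₀₁₂
  obtain ⟨u, v, huv, h₁, h₂, hge⟩ := hcmp t₁ t₂ ha₁ h12 hb₂
  replace huv : k * (u ^ 2 + v ^ 2) < 1 := (lt_div_iff₀' hk).1 huv
  have hφclose : ∀ t ∈ Icc t₁ t₂, dist (gSph k u v t) (g t₀) ≤ 2 * Δ := fun t ht =>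
    ((lipschitzWith_one_gSph hk huv).dist_le_add_of_eq h₁ (hnonexp t₁ (hsub ht₁) t₀ ht₀) t).trans
      (by linarith [hΔeq ▸ dist_le_of_mem_Icc ht ht₁, hnear t₁ ht₁])
  obtain ⟨ξ, hξ, ζ, hζ, hξζ, hlo, hhi⟩ := exists_deriv2_le_sphRhs_of_touch hk huv h12
    (fun t ht => (hg t (hsub ht)).mono hsub) (hg'c.mono hsub)
    (fun t ht => hg' t (Ioo_subset_Ioo ha₁ hb₂ ht)) hge h₁ h₂ (half_pos hpos)
    (fun t ht => by linarith [(abs_le.1 (hφclose t ht)).1])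
    fun t ht => (mul_le_mul_of_nonneg_left (hge t ht) (sqrt_nonneg k)).trans (hsmall t (hsub ht)).le
  have hKΔ : K * Δ < ε / 2 := by
    have := (lt_div_iff₀ (mul_pos two_pos hK)).1 hΔK
    linarith
  have hg't₁ := hg'r (hsub ht₁) ((hnear t₁ ht₁).trans_lt hΔr)
  have hg't₂ := hg'r (hsub ht₂) ((hnear t₂ ht₂).trans_lt hΔr)
  rw [Real.dist_eq, abs_lt] at hg't₁ hg't₂
  rw [hΔeq] at hlo hhi
  refine ⟨(ξ, gSphDeriv k u v ζ, gSph k u v ζ), ⟨hsub (Ioo_subset_Icc_self hξ), hξζ⟩, ?_⟩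
  simp only [Prod.dist_eq, max_lt_iff]
  refine ⟨?_, ?_, ?_⟩
  · rw [dist_comm]
    exact (hnear ξ (Ioo_subset_Icc_self hξ)).trans_lt (by linarith)
  · rw [Real.dist_eq, abs_lt]
    constructor <;> linarith
  · rw [dist_comm]
    exact (hφclose ζ (Ioo_subset_Icc_self hζ)).trans_lt (by linarith)

end Comparison

theorem diff_ineq_rev_of_sph_comparison_general (k : ℝ) (hk : 0 < k) (a b : ℝ) (hab : a < b)
    (g : ℝ → ℝ)
    (hC2 : ContDiffOn ℝ 2 g (Icc a b))
    (hpos : ∀ t ∈ Icc a b, 0 < g t)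
    (hnonexp : ∀ t₁ ∈ Icc a b, ∀ t₂ ∈ Icc a b, |g t₁ - g t₂| ≤ |t₁ - t₂|)
    (hsmall : ∀ t ∈ Icc a b, Real.sqrt k * g t < Real.pi / 2)
    (hcmp : ∀ t₁ t₂, a ≤ t₁ → t₁ < t₂ → t₂ ≤ b →
      ∃ u v : ℝ, u ^ 2 + v ^ 2 < 1 / k ∧
      gSph k u v t₁ = g t₁ ∧ gSph k u v t₂ = g t₂ ∧
      ∀ t ∈ Icc t₁ t₂, g t ≥ gSph k u v t) :
    ∀ t ∈ Icc a b, (derivWithin (derivWithin g (Icc a b)) (Icc a b)) t ≤ Real.sqrt k * (1 - ((derivWithin g (Icc a b)) t) ^ 2) * Real.cot (Real.sqrt k * g t) := by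
  intro t₀ ht₀
  have hud : UniqueDiffOn ℝ (Icc a b) := uniqueDiffOn_Icc hab
  have hC1 : ContDiffOn ℝ 1 (derivWithin g (Icc a b)) (Icc a b) :=
    hC2.derivWithin hud (by norm_num)
  have hsin : sin (√k * g t₀) ≠ 0 := (sin_pos_of_pos_of_lt_pi
    (mul_pos (sqrt_pos.2 hk) (hpos t₀ ht₀)) (by linarith [hsmall t₀ ht₀, pi_pos])).ne'
  have hclosure := mem_closure_deriv2_le_sphRhs hk hab
    (fun t ht => (hC2.differentiableOn (by norm_num) t ht).hasDerivWithinAt) hC1.continuousOn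
    (fun t ht => (hC1.differentiableOn one_ne_zero t (Ioo_subset_Icc_self ht)).hasDerivWithinAt
      |>.hasDerivAt (Icc_mem_nhds ht.1 ht.2)) hnonexp hsmall hcmp ht₀ (hpos t₀ ht₀)
  exact le_of_mem_closure_setOf_le (h := fun p : ℝ × ℝ => sphRhs k p.1 p.2)
    (hC1.continuousOn_derivWithin hud le_rfl t₀ ht₀)
    (continuousAt_sphRhs hsin) hclosure

theorem diff_ineq_rev_of_sph_comparison (k : ℝ) (hk : 0 < k) (a b : ℝ) (ha : 0 ≤ a) (hab : a < b)
    (hb : Real.sqrt k * b < Real.pi / 2) (g : ℝ → ℝ)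
    (hC2 : ContDiffOn ℝ 2 g (Icc a b))
    (hpos : ∀ t ∈ Icc a b, 0 < g t)
    (hnonexp : ∀ t₁ ∈ Icc a b, ∀ t₂ ∈ Icc a b, |g t₁ - g t₂| ≤ |t₁ - t₂|)
    (hdistlike : ∀ t₁ ∈ Icc a b, ∀ t₂ ∈ Icc a b, |t₁ - t₂| ≤ g t₁ + g t₂)
    (hsmall : ∀ t ∈ Icc a b, Real.sqrt k * g t < Real.pi / 2)
    (hcmp : ∀ t₁ t₂, a ≤ t₁ → t₁ < t₂ → t₂ ≤ b →
      ∃ u v : ℝ, u ^ 2 + v ^ 2 < 1 / k ∧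
      gSph k u v t₁ = g t₁ ∧ gSph k u v t₂ = g t₂ ∧
      ∀ t ∈ Icc t₁ t₂, g t ≥ gSph k u v t) :
    ∀ t ∈ Icc a b, (derivWithin (derivWithin g (Icc a b)) (Icc a b)) t ≤ Real.sqrt k * (1 - ((derivWithin g (Icc a b)) t) ^ 2) * Real.cot (Real.sqrt k * g t) :=
  diff_ineq_rev_of_sph_comparison_general k hk a b hab g hC2 hpos hnonexp hsmall hcmp
end

section
/- Let k > 0, let 0 ≤ a < b with √k · b < π/2, and let g : [a,b] → ℝ be a C², positive-valued function with √k · g(t) < π/2 for all t ∈ [a,b]. Define H : [a,b] → ℝ by H(t) = g'(t) cos(√k t) sin(√k g(t)) − sin(√k t) cos(√k g(t)). Then for all t ∈ [a,b], H'(t) = cos(√k t) ( sin(√k g(t)) · g''(t) + √k · cos(√k g(t)) · ((g'(t))² − 1) ). In particular, H'(t) ≥ 0 for all t ∈ [a,b] if and only if g''(t) ≥ √k·(1 − (g'(t))²)·cot(√k·g(t)) for all t ∈ [a,b]. -/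
open Set Real

/-!
Differentiating `H` by the product and chain rules, the two terms `± √k g' sin(√k t) sin(√k g)`
cancel and what remains is `cos(√k t) (sin(√k g) g'' + √k cos(√k g) (g'² - 1))`. On `[a,b]` both
`cos(√k t)` and `sin(√k g t)` are positive, so `H' ≥ 0` is equivalent to the bracket being
nonnegative, and dividing by `sin(√k g t)` turns this into the cotangent bound.
-/

theorem hasDerivWithinAt_mul_cos_mul_sin_sub_sin_mul_cos {g g₁ : ℝ → ℝ} {s : Set ℝ}
    {t g₂ c : ℝ} (hg : HasDerivWithinAt g (g₁ t) s t) (hg₁ : HasDerivWithinAt g₁ g₂ s t) :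
    HasDerivWithinAt (fun u => g₁ u * cos (c * u) * sin (c * g u) - sin (c * u) * cos (c * g u))
      (cos (c * t) * (sin (c * g t) * g₂ + c * cos (c * g t) * (g₁ t ^ 2 - 1))) s t := by
  have hlin : HasDerivWithinAt (fun u => c * u) c s t := by
    simpa using (hasDerivWithinAt_id t s).const_mul c
  have hcg := hg.const_mul c
  exact (((hg₁.mul hlin.cos).mul hcg.sin).sub (hlin.sin.mul hcg.cos)).congr_deriv
    (by simp only [Pi.mul_apply]; ring)

theorem cos_mul_pos_of_mem_Icc {c a b t : ℝ} (hc : 0 ≤ c) (ha : 0 ≤ a) (hb : c * b < π / 2)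
    (ht : t ∈ Icc a b) : 0 < cos (c * t) := by
  apply cos_pos_of_mem_Ioo
  constructor
  · linarith [pi_pos, mul_nonneg hc (ha.trans ht.1)]
  · exact (mul_le_mul_of_nonneg_left ht.2 hc).trans_lt hb

theorem mul_nonneg_iff_ge_mul_div {c p q x y z : ℝ} (hp : 0 < p) (hq : 0 < q) :
    0 ≤ p * (q * z + c * x * (y ^ 2 - 1)) ↔ z ≥ c * (1 - y ^ 2) * (x / q) := by
  rw [mul_nonneg_iff_of_pos_left hp, ge_iff_le, ← mul_div_assoc, div_le_iff₀ hq]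
  constructor <;> intro h <;> linarith

/-- For `k > 0` and a C², positive `g` on `[a,b] ⊆ [0, π/(2√k))` with `√k g < π/2`, the auxiliary
function `H t = g' t cos(√k t) sin(√k g t) - sin(√k t) cos(√k g t)` has derivative
`H' t = cos(√k t) (sin(√k g t) g'' t + √k cos(√k g t) ((g' t)² - 1))`,
and `H' ≥ 0` on `[a,b]` iff `g'' ≥ √k (1 - (g')²) cot(√k g)` on `[a,b]`. -/
theorem sph_auxiliary_derivative (k : ℝ) (hk : 0 < k) (a b : ℝ) (ha : 0 ≤ a) (hab : a < b)
    (hb : Real.sqrt k * b < Real.pi / 2) (g H : ℝ → ℝ)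
    (hC2 : ContDiffOn ℝ 2 g (Icc a b))
    (hpos : ∀ t ∈ Icc a b, 0 < g t)
    (hsmall : ∀ t ∈ Icc a b, Real.sqrt k * g t < Real.pi / 2)
    (hH : ∀ t, H t = derivWithin g (Icc a b) t * Real.cos (Real.sqrt k * t) *
      Real.sin (Real.sqrt k * g t) - Real.sin (Real.sqrt k * t) * Real.cos (Real.sqrt k * g t)) :
    (∀ t ∈ Icc a b, derivWithin H (Icc a b) t =
      Real.cos (Real.sqrt k * t) *
        (Real.sin (Real.sqrt k * g t) * derivWithin (derivWithin g (Icc a b)) (Icc a b) t +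
          Real.sqrt k * Real.cos (Real.sqrt k * g t) *
            ((derivWithin g (Icc a b) t) ^ 2 - 1))) ∧
    ((∀ t ∈ Icc a b, 0 ≤ derivWithin H (Icc a b) t) ↔
      (∀ t ∈ Icc a b, derivWithin (derivWithin g (Icc a b)) (Icc a b) t ≥
        Real.sqrt k * (1 - (derivWithin g (Icc a b) t) ^ 2) *
          Real.cot (Real.sqrt k * g t))) := by
  have hu : UniqueDiffOn ℝ (Icc a b) := uniqueDiffOn_Icc hab
  have hg₁ : ContDiffOn ℝ 1 (derivWithin g (Icc a b)) (Icc a b) :=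
    hC2.derivWithin hu (by norm_num)
  have hderiv : ∀ t ∈ Icc a b, derivWithin H (Icc a b) t =
      cos (√k * t) * (sin (√k * g t) * derivWithin (derivWithin g (Icc a b)) (Icc a b) t +
        √k * cos (√k * g t) * (derivWithin g (Icc a b) t ^ 2 - 1)) := by
    intro t ht
    rw [funext hH]
    exact (hasDerivWithinAt_mul_cos_mul_sin_sub_sin_mul_cos
      ((hC2.differentiableOn (by norm_num) t ht).hasDerivWithinAt)
      ((hg₁.differentiableOn one_ne_zero t ht).hasDerivWithinAt)).derivWithin (hu t ht)
  refine ⟨hderiv, forall₂_congr fun t ht => ?_⟩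
  have hsin : 0 < sin (√k * g t) :=
    sin_pos_of_pos_of_lt_pi (mul_pos (sqrt_pos.mpr hk) (hpos t ht))
      ((hsmall t ht).trans (half_lt_self pi_pos))
  rw [hderiv t ht, cot_eq_cos_div_sin]
  exact mul_nonneg_iff_ge_mul_div (cos_mul_pos_of_mem_Icc (sqrt_nonneg k) ha hb ht) hsin
end
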